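/- arXiv:1801.06425 — 9 statements merged into one kernel-verified Lean document; each statement's English description precedes it below -/
import Mathlib

section
/- Uniqueness up to an additive constant of the minimizer: Let E ⊆ ℝ^d be open and connected, let c : E → ℝ^{d×d} be continuous with c(x) symmetric positive definite for every x ∈ E, let p : E → (0,∞) be continuous, and let ℓ : E → ℝ^d be continuous. Suppose φ₁, φ₂ ∈ C¹(E) satisfy J(φ₁) = J(φ₂) < ∞ and J(φ₁) ≤ J(φ) for every φ ∈ C¹(E). Then there exists a constant k ∈ ℝ such that φ₂(x) = φ₁(x) + k for all x ∈ E; in particular ∇φ₁ = ∇φ₂ on E. -/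
/-!
Write `a = ∇φ₁ - ℓ`, `b = ∇φ₂ - ℓ` and `Q_x(v) = p(x) vᵀ c(x) v`. The parallelogram law
`4 Q((a + b)/2) + Q(b - a) = 2 Q(a) + 2 Q(b)`, integrated over `E`, gives
`4 J((φ₁ + φ₂)/2) + ∫ Q(∇φ₂ - ∇φ₁) ≤ 2 J(φ₁) + 2 J(φ₂) = 4 J(φ₁)`; since `J(φ₁)` is finite and
minimal, `∫ Q(∇φ₂ - ∇φ₁) = 0`. The integrand is continuous and `E` is open, so `Q(∇φ₂ - ∇φ₁)`
vanishes on `E`, hence `∇φ₁ = ∇φ₂` by positive definiteness, and `φ₂ - φ₁` is constant on the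
connected set `E`.
-/

open MeasureTheory

theorem QuadraticMap.map_add_add_map_sub {R M N : Type*} [CommRing R] [AddCommGroup M]
    [Module R M] [AddCommGroup N] [Module R N] (Q : QuadraticMap R M N) (u v : M) :
    Q (u + v) + Q (v - u) = 2 • Q u + 2 • Q v := by
  have h := Q.map_add_add_add_map u v (-u)
  simp only [QuadraticMap.map_neg, neg_add_cancel, QuadraticMap.map_zero, add_zero,
    ← sub_eq_add_neg, add_sub_cancel_left] at h
  rw [← h, two_nsmul, two_nsmul]
  abel

theorem Matrix.toQuadraticForm'_apply {n R : Type*} [Fintype n] [DecidableEq n] [CommRing R]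
    (M : Matrix n n R) (w : n → R) :
    M.toQuadraticForm' w = ∑ i, ∑ j, w i * M i j * w j := by
  simp only [Matrix.toQuadraticForm', LinearMap.BilinMap.toQuadraticMap_apply,
    Matrix.toLinearMap₂'_apply, smul_eq_mul]
  exact Finset.sum_congr rfl fun i _ => Finset.sum_congr rfl fun j _ => by ring

theorem QuadraticMap.ofReal_map_midpoint_add_ofReal_map_sub {V : Type*} [AddCommGroup V]
    [Module ℝ V] {Q : QuadraticForm ℝ V} (hQ : ∀ v, 0 ≤ Q v) (u v : V) :
    4 * ENNReal.ofReal (Q ((2 : ℝ)⁻¹ • (u + v))) + ENNReal.ofReal (Q (v - u)) =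
      2 * ENNReal.ofReal (Q u) + 2 * ENNReal.ofReal (Q v) := by
  have h4 : 4 * Q ((2 : ℝ)⁻¹ • (u + v)) = Q (u + v) := by
    rw [QuadraticMap.map_smul, smul_eq_mul]; ring
  have key := Q.map_add_add_map_sub u v
  rw [two_nsmul, two_nsmul, ← h4] at key
  rw [← ENNReal.ofReal_ofNat 4, ← ENNReal.ofReal_ofNat 2, ← ENNReal.ofReal_mul (by norm_num),
    ← ENNReal.ofReal_mul (by norm_num), ← ENNReal.ofReal_mul (by norm_num),
    ← ENNReal.ofReal_add (mul_nonneg (by norm_num) (hQ _)) (hQ _),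
    ← ENNReal.ofReal_add (mul_nonneg (by norm_num) (hQ _)) (mul_nonneg (by norm_num) (hQ _)), key]
  ring_nf

noncomputable def quadraticEnergy {α V : Type*} [MeasurableSpace α] [AddCommGroup V] [Module ℝ V]
    (μ : Measure α) (Q : α → QuadraticForm ℝ V) (a : α → V) : ENNReal :=
  ∫⁻ x, ENNReal.ofReal (Q x (a x)) ∂μ

theorem quadraticEnergy_sub_eq_zero_of_le_midpoint {α V : Type*} [MeasurableSpace α]
    {μ : Measure α} [AddCommGroup V] [Module ℝ V] {Q : α → QuadraticForm ℝ V}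
    (hQ : ∀ᵐ x ∂μ, ∀ v, 0 ≤ Q x v) {a b : α → V} (ha : AEMeasurable (fun x => Q x (a x)) μ)
    (hab : quadraticEnergy μ Q a = quadraticEnergy μ Q b) (hfin : quadraticEnergy μ Q a ≠ ⊤)
    (hmin : quadraticEnergy μ Q a ≤ quadraticEnergy μ Q fun x => (2 : ℝ)⁻¹ • (a x + b x)) :
    quadraticEnergy μ Q (b - a) = 0 := by
  unfold quadraticEnergy at *
  set Ja := ∫⁻ x, ENNReal.ofReal (Q x (a x)) ∂μ
  have h4Ja : 4 * Ja ≠ ⊤ := ENNReal.mul_ne_top (by norm_num) hfin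
  suffices 4 * Ja + ∫⁻ x, ENNReal.ofReal (Q x (b x - a x)) ∂μ ≤ 4 * Ja + 0 from
    le_antisymm ((ENNReal.add_le_add_iff_left h4Ja).1 this) bot_le
  calc 4 * Ja + ∫⁻ x, ENNReal.ofReal (Q x (b x - a x)) ∂μ
      ≤ ∫⁻ x, 4 * ENNReal.ofReal (Q x ((2 : ℝ)⁻¹ • (a x + b x))) ∂μ +
          ∫⁻ x, ENNReal.ofReal (Q x (b x - a x)) ∂μ := by
        rw [lintegral_const_mul' _ _ (by norm_num)]
        gcongr
    -- superadditivity holds without measurability, so only `a` has to be measurable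
    _ ≤ ∫⁻ x, 4 * ENNReal.ofReal (Q x ((2 : ℝ)⁻¹ • (a x + b x))) +
          ENNReal.ofReal (Q x (b x - a x)) ∂μ := le_lintegral_add _ _
    _ = ∫⁻ x, 2 * ENNReal.ofReal (Q x (a x)) + 2 * ENNReal.ofReal (Q x (b x)) ∂μ :=
        lintegral_congr_ae <| hQ.mono fun x hx =>
          QuadraticMap.ofReal_map_midpoint_add_ofReal_map_sub hx _ _
    _ = 2 * Ja + 2 * Ja := by
        rw [lintegral_add_left' (ha.ennreal_ofReal.const_mul 2),
          lintegral_const_mul' _ _ (by norm_num), lintegral_const_mul' _ _ (by norm_num), ← hab]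
    _ = 4 * Ja + 0 := by ring

theorem ContinuousOn.le_zero_of_setLIntegral_ofReal_eq_zero {X : Type*} [TopologicalSpace X]
    [MeasurableSpace X] [OpensMeasurableSpace X] {μ : Measure X} [μ.IsOpenPosMeasure]
    {U : Set X} {f : X → ℝ} (hU : IsOpen U) (hf : ContinuousOn f U)
    (h : ∫⁻ x in U, ENNReal.ofReal (f x) ∂μ = 0) : ∀ x ∈ U, f x ≤ 0 := by
  have hf' : ContinuousOn (fun x => ENNReal.ofReal (f x)) U :=
    ENNReal.continuous_ofReal.comp_continuousOn hf
  have hae := (lintegral_eq_zero_iff' (hf'.aemeasurable hU.measurableSet)).1 h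
  intro x hx
  simpa using Measure.eqOn_open_of_ae_eq hae hU hf' continuousOn_const hx

theorem eqOn_of_quadraticEnergy_sub_eq_zero {X V : Type*} [TopologicalSpace X]
    [MeasurableSpace X] [OpensMeasurableSpace X] {μ : Measure X} [μ.IsOpenPosMeasure]
    [AddCommGroup V] [Module ℝ V] {U : Set X} {Q : X → QuadraticForm ℝ V} {a b : X → V}
    (hU : IsOpen U) (hQ : ∀ x ∈ U, (Q x).PosDef)
    (hcont : ContinuousOn (fun x => Q x (b x - a x)) U)
    (h : quadraticEnergy (μ.restrict U) Q (b - a) = 0) : Set.EqOn a b U := fun x hx => by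
  have hle := hcont.le_zero_of_setLIntegral_ofReal_eq_zero hU h x hx
  rw [(hQ x hx).le_zero_iff, sub_eq_zero] at hle
  exact hle.symm

theorem ContinuousOn.smul_toQuadraticForm'_apply {α n : Type*} [TopologicalSpace α] [Fintype n]
    [DecidableEq n] {s : Set α} {c : α → Matrix n n ℝ} {p : α → ℝ} {w : α → n → ℝ}
    (hc : ∀ i j, ContinuousOn (fun x => c x i j) s) (hp : ContinuousOn p s)
    (hw : ContinuousOn w s) :
    ContinuousOn (fun x => (p x • (c x).toQuadraticForm') (w x)) s := by
  simp only [smul_apply, Matrix.toQuadraticForm'_apply, smul_eq_mul]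
  fun_prop

section coordGradient

variable {ι : Type*} [Fintype ι] [DecidableEq ι]

noncomputable def coordGradient (φ : (ι → ℝ) → ℝ) (x : ι → ℝ) : ι → ℝ :=
  ContinuousLinearEquiv.piRing (𝕜 := ℝ) (E := ℝ) ι (fderiv ℝ φ x)

theorem coordGradient_apply (φ : (ι → ℝ) → ℝ) (x : ι → ℝ) (i : ι) :
    coordGradient φ x i = fderiv ℝ φ x (Pi.single i 1) := rfl

theorem coordGradient_injective {φ ψ : (ι → ℝ) → ℝ} {x : ι → ℝ}
    (h : coordGradient φ x = coordGradient ψ x) : fderiv ℝ φ x = fderiv ℝ ψ x :=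
  (ContinuousLinearEquiv.piRing ι).injective h

theorem coordGradient_smul_add {φ ψ : (ι → ℝ) → ℝ} {x : ι → ℝ} (hφ : DifferentiableAt ℝ φ x)
    (hψ : DifferentiableAt ℝ ψ x) (a : ℝ) :
    coordGradient (fun y => a • (φ y + ψ y)) x = a • (coordGradient φ x + coordGradient ψ x) := by
  rw [coordGradient, fderiv_fun_const_smul (hφ.fun_add hψ), fderiv_fun_add hφ hψ, map_smul,
    map_add]
  rfl

theorem ContDiffOn.continuousOn_coordGradient {φ : (ι → ℝ) → ℝ} {s : Set (ι → ℝ)}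
    (hφ : ContDiffOn ℝ 1 φ s) (hs : IsOpen s) : ContinuousOn (coordGradient φ) s :=
  (ContinuousLinearEquiv.piRing ι).continuous.comp_continuousOn
    (hφ.continuousOn_fderiv_of_isOpen hs le_rfl)

end coordGradient

/-- Uniqueness up to an additive constant of the minimizer of the
robust-growth variational functional `J`. -/
theorem minimizer_unique_up_to_constant (d : ℕ) (E : Set (Fin d → ℝ))
    (hE : IsOpen E) (hEconn : IsConnected E)
    (c : (Fin d → ℝ) → Matrix (Fin d) (Fin d) ℝ)
    (hc_cont : ∀ i j, ContinuousOn (fun y => c y i j) E)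
    (hc_pd : ∀ x ∈ E, (c x).PosDef)
    (p : (Fin d → ℝ) → ℝ) (hp_cont : ContinuousOn p E) (hp_pos : ∀ x ∈ E, 0 < p x)
    (ℓ : (Fin d → ℝ) → (Fin d → ℝ)) (hℓ_cont : ContinuousOn ℓ E)
    (J : ((Fin d → ℝ) → ℝ) → ENNReal)
    (hJ : ∀ φ, J φ = ∫⁻ x in E, ENNReal.ofReal
      ((∑ i, ∑ j, (fderiv ℝ φ x (Pi.single i 1) - ℓ x i) * c x i j *
        (fderiv ℝ φ x (Pi.single j 1) - ℓ x j)) * p x))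
    (φ₁ φ₂ : (Fin d → ℝ) → ℝ)
    (h₁ : ContDiffOn ℝ 1 φ₁ E) (h₂ : ContDiffOn ℝ 1 φ₂ E)
    (heq : J φ₁ = J φ₂) (hfin : J φ₁ < ⊤)
    (hmin : ∀ φ : (Fin d → ℝ) → ℝ, ContDiffOn ℝ 1 φ E → J φ₁ ≤ J φ) :
    (∃ k : ℝ, ∀ x ∈ E, φ₂ x = φ₁ x + k) ∧
    ∀ x ∈ E, fderiv ℝ φ₁ x = fderiv ℝ φ₂ x := by
  set Q : (Fin d → ℝ) → QuadraticForm ℝ (Fin d → ℝ) := fun x => p x • (c x).toQuadraticForm'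
  set a := fun x => coordGradient φ₁ x - ℓ x
  set b := fun x => coordGradient φ₂ x - ℓ x
  have hJQ (φ) : J φ = quadraticEnergy (volume.restrict E) Q fun x => coordGradient φ x - ℓ x := by
    simp only [hJ, quadraticEnergy, Q, smul_apply, Matrix.toQuadraticForm'_apply, smul_eq_mul,
      mul_comm (p _), Pi.sub_apply, coordGradient_apply]
  have hQ_pd : ∀ x ∈ E, (Q x).PosDef := fun x hx =>
    (hc_pd x hx).toQuadraticForm'.smul (hp_pos x hx)
  have hQ_cont {w : (Fin d → ℝ) → Fin d → ℝ} (hw : ContinuousOn w E) :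
      ContinuousOn (fun x => Q x (w x)) E :=
    ContinuousOn.smul_toQuadraticForm'_apply hc_cont hp_cont hw
  have ha_cont : ContinuousOn a E := (h₁.continuousOn_coordGradient hE).sub hℓ_cont
  have hb_cont : ContinuousOn b E := (h₂.continuousOn_coordGradient hE).sub hℓ_cont
  have hd₁ := h₁.differentiableOn one_ne_zero
  have hd₂ := h₂.differentiableOn one_ne_zero
  have hmin_mid : quadraticEnergy (volume.restrict E) Q a ≤
      quadraticEnergy (volume.restrict E) Q fun x => (2 : ℝ)⁻¹ • (a x + b x) := by
    refine (hJQ φ₁ ▸ hmin _ ((h₁.add h₂).const_smul (2 : ℝ)⁻¹)).trans_eq <| (hJQ _).trans <|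
      setLIntegral_congr_fun hE.measurableSet fun x hx => ?_
    dsimp only [a, b]
    rw [coordGradient_smul_add (hd₁.differentiableAt (hE.mem_nhds hx))
      (hd₂.differentiableAt (hE.mem_nhds hx))]
    congr 2
    module
  have hzero : quadraticEnergy (volume.restrict E) Q (b - a) = 0 :=
    quadraticEnergy_sub_eq_zero_of_le_midpoint
      ((ae_restrict_iff' hE.measurableSet).2 <| .of_forall fun x hx => (hQ_pd x hx).nonneg)
      ((hQ_cont ha_cont).aemeasurable hE.measurableSet) (by rw [← hJQ, ← hJQ, heq])
      (hJQ φ₁ ▸ hfin.ne) hmin_mid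
  have hab : Set.EqOn a b E :=
    eqOn_of_quadraticEnergy_sub_eq_zero hE hQ_pd (hQ_cont (hb_cont.sub ha_cont)) hzero
  have hgrad (x) (hx : x ∈ E) : fderiv ℝ φ₁ x = fderiv ℝ φ₂ x :=
    coordGradient_injective (sub_left_inj.1 (hab hx))
  obtain ⟨k, hk⟩ := hE.exists_eq_add_of_fderiv_eq hEconn.isPreconnected hd₂ hd₁
    fun x hx => (hgrad x hx).symm
  exact ⟨⟨k, hk⟩, hgrad⟩
end

section
/- The key pointwise identity for L^c û/û (equation (second_order_simp) of the paper): Let E ⊆ ℝ^d be open, let c : E → ℝ^{d×d} be C² with c(x) symmetric positive definite for every x, let p : E → (0,∞) be C², and define ℓ := ∇p/p + c⁻¹ div c, so that p c ℓ = c∇p + p div c. Let φ̂ ∈ C²(E) satisfy ∇·( p c (∇φ̂ − ℓ) )(x) = 0 for all x ∈ E, and set û := exp(φ̂/2). Then for every x ∈ E: (1/(2 û(x))) Σ_{i,j} c_{ij}(x) ∂_i∂_j û(x) = (1/(4 p(x))) Σ_i ∂_i( c∇p + p div c )_i(x) + (1/8) (∇φ̂(x) − ℓ(x))ᵀ c(x)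 (∇φ̂(x) − ℓ(x)) − (1/8) ℓ(x)ᵀ c(x) ℓ(x). -/
/-!
Write `û = exp (φ̂/2)`. Then `∂ᵢ∂ⱼû = û (∂ᵢφ̂ ∂ⱼφ̂/4 + ∂ᵢ∂ⱼφ̂/2)`, so the left-hand side is
`⅛ ∇φ̂ᵀc∇φ̂ + ¼ Σ cᵢⱼ ∂ᵢ∂ⱼφ̂`. Because `p c ℓ = c∇p + p div c`, the flux `p c (∇φ̂ - ℓ)` is
`p c ∇φ̂ - (c∇p + p div c)`, so the Euler–Lagrange equation turns `∇·(c∇p + p div c)` into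
`∇·(p c ∇φ̂) = p Σ cᵢⱼ ∂ᵢ∂ⱼφ̂ + ∇φ̂ · ∇·(p c)`; for symmetric `c` the divergence of `p c` is again
`c∇p + p div c = p c ℓ`. Expanding `(∇φ̂ - ℓ)ᵀc(∇φ̂ - ℓ)` then matches both sides.
-/

open Real
open scoped Matrix

section Calculus
variable {F : Type*} [NormedAddCommGroup F] [NormedSpace ℝ F] {f : F → ℝ} {x : F}

theorem ContDiffAt.differentiableAt_fderiv_apply (hf : ContDiffAt ℝ 2 f x) (v : F) :
    DifferentiableAt ℝ (fun y => fderiv ℝ f y v) x :=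
  ((hf.fderiv_right (m := 1) le_rfl).differentiableAt one_ne_zero).clm_apply
    (differentiableAt_const v)

theorem fderiv_fderiv_exp_half_apply (hf : ContDiffAt ℝ 2 f x) (v w : F) :
    fderiv ℝ (fun y => fderiv ℝ (fun z => exp (f z / 2)) y v) x w =
      exp (f x / 2) * (fderiv ℝ f x w * fderiv ℝ f x v / 4
        + fderiv ℝ (fun y => fderiv ℝ f y v) x w / 2) := by
  simp only [div_eq_inv_mul]
  have hfirst : (fun y => fderiv ℝ (fun z => exp (2⁻¹ * f z)) y v)
      =ᶠ[nhds x] fun y => exp (2⁻¹ * f y) * (2⁻¹ * fderiv ℝ f y v) := by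
    filter_upwards [hf.eventually (by simp)] with y hy
    rw [_root_.fderiv_exp ((hy.differentiableAt two_ne_zero).const_mul _),
      fderiv_const_mul (hy.differentiableAt two_ne_zero)]
    rfl
  have hdx := (hf.differentiableAt two_ne_zero).const_mul (2⁻¹ : ℝ)
  rw [hfirst.fderiv_eq, fderiv_fun_mul hdx.exp
    ((hf.differentiableAt_fderiv_apply v).const_mul _), _root_.fderiv_exp hdx,
    fderiv_const_mul (hf.differentiableAt two_ne_zero),
    fderiv_const_mul (hf.differentiableAt_fderiv_apply v)]
  simp only [add_apply, smul_apply, smul_eq_mul]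
  ring

end Calculus

section Divergence
variable {ι : Type*} [Fintype ι] [DecidableEq ι] {x : ι → ℝ}

theorem sum_fderiv_sum_mul_apply {M : (ι → ℝ) → ι → ι → ℝ} {v : (ι → ℝ) → ι → ℝ}
    (hM : ∀ i j, DifferentiableAt ℝ (fun y => M y i j) x)
    (hv : ∀ j, DifferentiableAt ℝ (fun y => v y j) x) :
    ∑ i, fderiv ℝ (fun y => ∑ j, M y i j * v y j) x (Pi.single i 1) =
      ∑ j, (∑ i, fderiv ℝ (fun y => M y i j) x (Pi.single i 1)) * v x j
        + ∑ i, ∑ j, M x i j * fderiv ℝ (fun y => v y j) x (Pi.single i 1) := by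
  simp only [fderiv_fun_sum fun j _ => (hM _ j).fun_mul (hv j), sum_apply,
    fderiv_fun_mul (hM _ _) (hv _), add_apply, smul_apply, smul_eq_mul,
    Finset.sum_add_distrib, Finset.sum_mul]
  rw [add_comm, Finset.sum_comm (f := fun i j => v x j * _)]
  simp only [mul_comm]

theorem sum_fderiv_mul_apply {p : (ι → ℝ) → ℝ} {m : (ι → ℝ) → ι → ℝ}
    (hp : DifferentiableAt ℝ p x) (hm : ∀ j, DifferentiableAt ℝ (fun y => m y j) x) :
    ∑ j, fderiv ℝ (fun y => p y * m y j) x (Pi.single j 1) =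
      ∑ j, m x j * fderiv ℝ p x (Pi.single j 1)
        + p x * ∑ j, fderiv ℝ (fun y => m y j) x (Pi.single j 1) := by
  simp only [fderiv_fun_mul hp (hm _), add_apply, smul_apply, smul_eq_mul,
    Finset.sum_add_distrib, Finset.mul_sum]
  rw [add_comm]

theorem sum_fderiv_eq_of_eventuallyEq_sub {F A G : (ι → ℝ) → ι → ℝ}
    (hF : ∀ i, (fun y => F y i) =ᶠ[nhds x] fun y => A y i - G y i)
    (hA : ∀ i, DifferentiableAt ℝ (fun y => A y i) x)
    (hG : ∀ i, DifferentiableAt ℝ (fun y => G y i) x)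
    (hdivF : ∑ i, fderiv ℝ (fun y => F y i) x (Pi.single i 1) = 0) :
    ∑ i, fderiv ℝ (fun y => G y i) x (Pi.single i 1) =
      ∑ i, fderiv ℝ (fun y => A y i) x (Pi.single i 1) := by
  simp only [(hF _).fderiv_eq, fderiv_fun_sub (hA _) (hG _), sub_apply,
    Finset.sum_sub_distrib] at hdivF
  linarith

end Divergence

section Algebra
variable {ι : Type*} [Fintype ι]

theorem mul_mulVec_div_add_inv_mulVec [DecidableEq ι] {C : Matrix ι ι ℝ} (hC : IsUnit C.det)
    {q : ℝ} (hq : q ≠ 0) (a w : ι → ℝ) (i : ι) :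
    q * (C *ᵥ ((fun j => a j / q) + C⁻¹ *ᵥ w)) i = (∑ j, C i j * a j) + q * w i := by
  rw [Matrix.mulVec_add, Matrix.mulVec_mulVec, Matrix.mul_nonsing_inv _ hC, Matrix.one_mulVec,
    Pi.add_apply, Matrix.mulVec_apply_eq_sum, mul_add, Finset.mul_sum]
  congr 2 with j
  field_simp

theorem Matrix.IsSymm.sum_sum_mul_mul_comm {C : Matrix ι ι ℝ} (hC : C.IsSymm) (a b : ι → ℝ) :
    ∑ i, ∑ j, a i * C i j * b j = ∑ i, ∑ j, b i * C i j * a j := by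
  rw [Finset.sum_comm]
  refine Finset.sum_congr rfl fun i _ => Finset.sum_congr rfl fun j _ => ?_
  rw [hC.apply]
  ring

theorem Matrix.IsSymm.sum_sum_sub_mul_mul_sub {C : Matrix ι ι ℝ} (hC : C.IsSymm) (a b : ι → ℝ) :
    ∑ i, ∑ j, (a i - b i) * C i j * (a j - b j) =
      ∑ i, ∑ j, a i * C i j * a j - 2 * ∑ i, ∑ j, b i * C i j * a j
        + ∑ i, ∑ j, b i * C i j * b j := by
  have hexpand : ∀ i j, (a i - b i) * C i j * (a j - b j) =
      a i * C i j * a j - a i * C i j * b j - b i * C i j * a j + b i * C i j * b j :=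
    fun i j => by ring
  simp only [hexpand, Finset.sum_add_distrib, Finset.sum_sub_distrib, hC.sum_sum_mul_mul_comm a b]
  ring

theorem Matrix.IsSymm.second_order_identity {C : Matrix ι ι ℝ} (hC : C.IsSymm) {q u : ℝ}
    (hq : q ≠ 0) (hu : u ≠ 0) (g l : ι → ℝ) (H : ι → ι → ℝ) :
    1 / (2 * u) * ∑ i, ∑ j, C i j * (u * (g i * g j / 4 + H i j / 2)) =
      1 / (4 * q) * (∑ j, q * (C *ᵥ l) j * g j + ∑ i, ∑ j, q * C i j * H i j)
        + 1 / 8 * ∑ i, ∑ j, (g i - l i) * C i j * (g j - l j)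
        - 1 / 8 * ∑ i, ∑ j, l i * C i j * l j := by
  have hmulVec : ∑ j, q * (C *ᵥ l) j * g j = q * ∑ i, ∑ j, l i * C i j * g j := by
    simp only [Matrix.mulVec_apply_eq_sum, Finset.mul_sum, Finset.sum_mul]
    rw [Finset.sum_comm]
    refine Finset.sum_congr rfl fun i _ => Finset.sum_congr rfl fun j _ => ?_
    rw [hC.apply]
    ring
  have hhess : ∑ i, ∑ j, q * C i j * H i j = q * ∑ i, ∑ j, C i j * H i j := by
    simp only [Finset.mul_sum, mul_assoc]
  have hlhs : ∑ i, ∑ j, C i j * (u * (g i * g j / 4 + H i j / 2)) =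
      u * (∑ i, ∑ j, g i * C i j * g j / 4 + ∑ i, ∑ j, C i j * H i j / 2) := by
    simp only [← Finset.sum_add_distrib, Finset.mul_sum]
    refine Finset.sum_congr rfl fun i _ => Finset.sum_congr rfl fun j _ => ?_
    ring
  simp only [← Finset.sum_div] at hlhs
  rw [hlhs, hmulVec, hhess, hC.sum_sum_sub_mul_mul_sub]
  field_simp
  ring

end Algebra

section Flux
variable {ι : Type*} [Fintype ι] [DecidableEq ι] {c : (ι → ℝ) → Matrix ι ι ℝ}
  {p : (ι → ℝ) → ℝ} {ℓ : (ι → ℝ) → ι → ℝ} {y : ι → ℝ}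

theorem mul_sum_mul_sub_of_eq_div_add_inv_mulVec (hc : IsUnit (c y).det) (hp : p y ≠ 0)
    (hℓ : ℓ y = (fun i => fderiv ℝ p y (Pi.single i 1) / p y)
      + (c y)⁻¹ *ᵥ (fun i => ∑ j, fderiv ℝ (fun z => c z i j) y (Pi.single j 1)))
    (g : ι → ℝ) (i : ι) :
    p y * ∑ j, c y i j * (g j - ℓ y j) =
      ∑ j, p y * c y i j * g j - ((∑ j, c y i j * fderiv ℝ p y (Pi.single j 1))
        + p y * ∑ j, fderiv ℝ (fun z => c z i j) y (Pi.single j 1)) := by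
  have hcℓ := mul_mulVec_div_add_inv_mulVec hc hp (fun j => fderiv ℝ p y (Pi.single j 1))
    (fun i => ∑ j, fderiv ℝ (fun z => c z i j) y (Pi.single j 1)) i
  rw [← hℓ, Matrix.mulVec_apply_eq_sum] at hcℓ
  rw [← hcℓ, Finset.mul_sum, Finset.mul_sum, ← Finset.sum_sub_distrib]
  simp only [mul_sub, mul_assoc]

theorem sum_fderiv_sum_mul_mul_apply {φ : (ι → ℝ) → ℝ}
    (hsymm : ∀ᶠ z in nhds y, (c z).IsSymm) (hc : IsUnit (c y).det) (hp : p y ≠ 0)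
    (hℓ : ℓ y = (fun i => fderiv ℝ p y (Pi.single i 1) / p y)
      + (c y)⁻¹ *ᵥ (fun i => ∑ j, fderiv ℝ (fun z => c z i j) y (Pi.single j 1)))
    (hpd : DifferentiableAt ℝ p y) (hcd : ∀ i j, DifferentiableAt ℝ (fun z => c z i j) y)
    (hφd : ∀ j, DifferentiableAt ℝ (fun z => fderiv ℝ φ z (Pi.single j 1)) y) :
    ∑ i, fderiv ℝ (fun z => ∑ j, p z * c z i j * fderiv ℝ φ z (Pi.single j 1)) y
        (Pi.single i 1) =
      ∑ j, p y * (c y *ᵥ ℓ y) j * fderiv ℝ φ y (Pi.single j 1)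
        + ∑ i, ∑ j, p y * c y i j *
          fderiv ℝ (fun z => fderiv ℝ φ z (Pi.single j 1)) y (Pi.single i 1) := by
  have hdiv : ∀ j, ∑ i, fderiv ℝ (fun z => p z * c z i j) y (Pi.single i 1) =
      p y * (c y *ᵥ ℓ y) j := by
    intro j
    have hswap : ∀ i, fderiv ℝ (fun z => p z * c z i j) y =
        fderiv ℝ (fun z => p z * c z j i) y := fun i =>
      Filter.EventuallyEq.fderiv_eq <| hsymm.mono fun z hz => by beta_reduce; rw [hz.apply]
    rw [Finset.sum_congr rfl fun i _ => congrArg (· (Pi.single i 1)) (hswap i),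
      sum_fderiv_mul_apply hpd (hcd j), hℓ, mul_mulVec_div_add_inv_mulVec hc hp]
  rw [sum_fderiv_sum_mul_apply (M := fun z i j => p z * c z i j)
    (fun i j => hpd.mul (hcd i j)) hφd]
  simp only [hdiv]

end Flux

/-- The key pointwise identity for `L^c û / û` (equation (second_order_simp)):
if `∇·(p c (∇φ̂ − ℓ)) = 0` on `E` and `û = exp(φ̂/2)`, then
`L^c û/û = (1/(4p)) ∇·(c∇p + p div c) + (1/8)(∇φ̂ − ℓ)ᵀc(∇φ̂ − ℓ) − (1/8) ℓᵀcℓ`. -/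
theorem second_order_simp (d : ℕ) (E : Set (Fin d → ℝ)) (hE : IsOpen E)
    (c : (Fin d → ℝ) → Matrix (Fin d) (Fin d) ℝ)
    (hc : ∀ i j, ContDiffOn ℝ 2 (fun y => c y i j) E)
    (hc_pd : ∀ x ∈ E, (c x).PosDef)
    (p : (Fin d → ℝ) → ℝ) (hp : ContDiffOn ℝ 2 p E) (hp_pos : ∀ x ∈ E, 0 < p x)
    (ℓ : (Fin d → ℝ) → (Fin d → ℝ))
    (hℓ : ∀ x ∈ E, ℓ x = (fun i => fderiv ℝ p x (Pi.single i 1) / p x)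
      + (c x)⁻¹.mulVec (fun i => ∑ j, fderiv ℝ (fun z => c z i j) x (Pi.single j 1)))
    (φhat : (Fin d → ℝ) → ℝ) (hφhat : ContDiffOn ℝ 2 φhat E)
    (hEL : ∀ x ∈ E,
      ∑ i, fderiv ℝ (fun y => p y * ∑ j, c y i j *
        (fderiv ℝ φhat y (Pi.single j 1) - ℓ y j)) x (Pi.single i 1) = 0) :
    ∀ x ∈ E,
      (1 / (2 * Real.exp (φhat x / 2))) *
        ∑ i, ∑ j, c x i j *
          fderiv ℝ (fun y => fderiv ℝ (fun z => Real.exp (φhat z / 2)) y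
            (Pi.single j 1)) x (Pi.single i 1)
      = (1 / (4 * p x)) *
          ∑ i, fderiv ℝ (fun y =>
            (∑ j, c y i j * fderiv ℝ p y (Pi.single j 1))
            + p y * ∑ j, fderiv ℝ (fun z => c z i j) y (Pi.single j 1)) x (Pi.single i 1)
        + (1/8) * ∑ i, ∑ j, (fderiv ℝ φhat x (Pi.single i 1) - ℓ x i) * c x i j *
            (fderiv ℝ φhat x (Pi.single j 1) - ℓ x j)
        - (1/8) * ∑ i, ∑ j, ℓ x i * c x i j * ℓ x j := by
  intro x hx
  have hxE : E ∈ nhds x := hE.mem_nhds hx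
  have hsymm : ∀ y ∈ E, (c y).IsSymm := fun y hy =>
    Matrix.isHermitian_iff_isSymm.mp (hc_pd y hy).isHermitian
  have hunit : ∀ y ∈ E, IsUnit (c y).det := fun y hy => (hc_pd y hy).det_pos.ne'.isUnit
  have hC2 {f : (Fin d → ℝ) → ℝ} (hf : ContDiffOn ℝ 2 f E) : ContDiffAt ℝ 2 f x :=
    hf.contDiffAt hxE
  have hpd := (hC2 hp).differentiableAt two_ne_zero
  have hcd i j := (hC2 (hc i j)).differentiableAt two_ne_zero
  have hpd' j := (hC2 hp).differentiableAt_fderiv_apply (Pi.single j 1)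
  have hcd' i j := (hC2 (hc i j)).differentiableAt_fderiv_apply (Pi.single j 1)
  have hφd' j := (hC2 hφhat).differentiableAt_fderiv_apply (Pi.single j 1)
  have hdiv := sum_fderiv_eq_of_eventuallyEq_sub
    (fun i => Filter.eventually_of_mem hxE fun y hy =>
      mul_sum_mul_sub_of_eq_div_add_inv_mulVec (hunit y hy) (hp_pos y hy).ne' (hℓ y hy) _ i)
    (by fun_prop) (by fun_prop) (hEL x hx)
  simp only [fderiv_fderiv_exp_half_apply (hC2 hφhat)]
  rw [hdiv, sum_fderiv_sum_mul_mul_apply (Filter.eventually_of_mem hxE hsymm) (hunit x hx)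
    (hp_pos x hx).ne' (hℓ x hx) hpd hcd hφd']
  exact (hsymm x hx).second_order_identity (hp_pos x hx).ne' (exp_pos _).ne' _ _ _
end

section
/- One-dimensional product transform identity: Let E ⊆ ℝ be a nonempty open interval, let f : E → (0,∞) be twice differentiable, and let G : E → (0,∞) be differentiable with G'(x) = 1/f(x) for all x ∈ E. Set u := √f and v := √G. Then u·v is twice differentiable on E and for every x ∈ E: (u v)''(x) / ((u v)(x)) = u''(x)/u(x) − 1 / (4 f(x)² G(x)²). -/
/-- One-dimensional product transform identity: with `u = √f`, `v = √G` and
`G' = 1/f`, one has `(uv)''/(uv) = u''/u − 1/(4 f² G²)` on `E`. -/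
theorem product_transform_one_dim (E : Set ℝ) (hE : IsOpen E) (hne : E.Nonempty)
    (hconn : E.OrdConnected)
    (f G : ℝ → ℝ) (hf_pos : ∀ x ∈ E, 0 < f x) (hG_pos : ∀ x ∈ E, 0 < G x)
    (hf1 : ∀ x ∈ E, DifferentiableAt ℝ f x)
    (hf2 : ∀ x ∈ E, DifferentiableAt ℝ (deriv f) x)
    (hG : ∀ x ∈ E, HasDerivAt G (1 / f x) x) :
    (∀ x ∈ E, DifferentiableAt ℝ (fun y => Real.sqrt (f y) * Real.sqrt (G y)) x) ∧
    (∀ x ∈ E, DifferentiableAt ℝ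
      (deriv (fun y => Real.sqrt (f y) * Real.sqrt (G y))) x) ∧
    ∀ x ∈ E,
      deriv (deriv (fun y => Real.sqrt (f y) * Real.sqrt (G y))) x /
        (Real.sqrt (f x) * Real.sqrt (G x))
      = deriv (deriv (fun y => Real.sqrt (f y))) x / Real.sqrt (f x)
        - 1 / (4 * (f x)^2 * (G x)^2) := by
  -- basic derivative facts at any point of E
  have hu : ∀ x ∈ E, HasDerivAt (fun y => Real.sqrt (f y))
      (1 / (2 * Real.sqrt (f x)) * deriv f x) x := by
    intro x hx
    exact (Real.hasDerivAt_sqrt (hf_pos x hx).ne').comp x (hf1 x hx).hasDerivAt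
  have hv : ∀ x ∈ E, HasDerivAt (fun y => Real.sqrt (G y))
      (1 / (2 * Real.sqrt (G x)) * (1 / f x)) x := by
    intro x hx
    exact (Real.hasDerivAt_sqrt (hG_pos x hx).ne').comp x (hG x hx)
  have huv : ∀ x ∈ E, HasDerivAt (fun y => Real.sqrt (f y) * Real.sqrt (G y))
      (1 / (2 * Real.sqrt (f x)) * deriv f x * Real.sqrt (G x)
        + Real.sqrt (f x) * (1 / (2 * Real.sqrt (G x)) * (1 / f x))) x := by
    intro x hx
    exact (hu x hx).mul (hv x hx)
  -- explicit first-derivative functions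
  set U1 : ℝ → ℝ := fun y => (2 * Real.sqrt (f y))⁻¹ * deriv f y with hU1def
  set V1 : ℝ → ℝ := fun y => (2 * Real.sqrt (G y))⁻¹ * (f y)⁻¹ with hV1def
  set D1 : ℝ → ℝ := fun y => U1 y * Real.sqrt (G y) + Real.sqrt (f y) * V1 y with hD1def
  have hEqU : ∀ x ∈ E, deriv (fun y => Real.sqrt (f y)) =ᶠ[nhds x] U1 := by
    intro x hx
    filter_upwards [hE.mem_nhds hx] with y hy
    rw [(hu y hy).deriv, hU1def]
    simp [one_div]
  have hEqD : ∀ x ∈ E,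
      deriv (fun y => Real.sqrt (f y) * Real.sqrt (G y)) =ᶠ[nhds x] D1 := by
    intro x hx
    filter_upwards [hE.mem_nhds hx] with y hy
    rw [(huv y hy).deriv, hD1def, hU1def, hV1def]
    simp [one_div]
  -- second derivative ingredients
  have hsf : ∀ x ∈ E, (0:ℝ) < Real.sqrt (f x) := fun x hx => Real.sqrt_pos.mpr (hf_pos x hx)
  have hsG : ∀ x ∈ E, (0:ℝ) < Real.sqrt (G x) := fun x hx => Real.sqrt_pos.mpr (hG_pos x hx)
  have hU1' : ∀ x ∈ E, HasDerivAt U1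
      (-(2 * (1 / (2 * Real.sqrt (f x)) * deriv f x)) / (2 * Real.sqrt (f x)) ^ 2 * deriv f x
        + (2 * Real.sqrt (f x))⁻¹ * deriv (deriv f) x) x := by
    intro x hx
    exact (((hu x hx).const_mul 2).inv (by have := hsf x hx; positivity)).mul
      (hf2 x hx).hasDerivAt
  have hV1' : ∀ x ∈ E, HasDerivAt V1
      (-(2 * (1 / (2 * Real.sqrt (G x)) * (1 / f x))) / (2 * Real.sqrt (G x)) ^ 2 * (f x)⁻¹
        + (2 * Real.sqrt (G x))⁻¹ * (-deriv f x / f x ^ 2)) x := by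
    intro x hx
    exact (((hv x hx).const_mul 2).inv (by have := hsG x hx; positivity)).mul
      ((hf1 x hx).hasDerivAt.inv (hf_pos x hx).ne')
  have hD1' : ∀ x ∈ E, HasDerivAt D1
      ((-(2 * (1 / (2 * Real.sqrt (f x)) * deriv f x)) / (2 * Real.sqrt (f x)) ^ 2 * deriv f x
          + (2 * Real.sqrt (f x))⁻¹ * deriv (deriv f) x) * Real.sqrt (G x)
        + U1 x * (1 / (2 * Real.sqrt (G x)) * (1 / f x))
        + (1 / (2 * Real.sqrt (f x)) * deriv f x * V1 x
          + Real.sqrt (f x) *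
            (-(2 * (1 / (2 * Real.sqrt (G x)) * (1 / f x))) / (2 * Real.sqrt (G x)) ^ 2 * (f x)⁻¹
              + (2 * Real.sqrt (G x))⁻¹ * (-deriv f x / f x ^ 2)))) x := by
    intro x hx
    exact ((hU1' x hx).mul (hv x hx)).add ((hu x hx).mul (hV1' x hx))
  refine ⟨fun x hx => (huv x hx).differentiableAt, fun x hx => ?_, fun x hx => ?_⟩
  · exact (hEqD x hx).differentiableAt_iff.mpr (hD1' x hx).differentiableAt
  · have e1 : deriv (deriv (fun y => Real.sqrt (f y) * Real.sqrt (G y))) x = deriv D1 x :=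
      (hEqD x hx).deriv_eq
    have e2 : deriv (deriv (fun y => Real.sqrt (f y))) x = deriv U1 x :=
      (hEqU x hx).deriv_eq
    rw [e1, e2, (hD1' x hx).deriv, (hU1' x hx).deriv, hU1def, hV1def]
    simp only
    have ha := hsf x hx
    have hb := hsG x hx
    have haf : f x = Real.sqrt (f x) ^ 2 := (Real.sq_sqrt (hf_pos x hx).le).symm
    have hbG : G x = Real.sqrt (G x) ^ 2 := (Real.sq_sqrt (hG_pos x hx).le).symm
    set s := Real.sqrt (f x) with hs
    set t := Real.sqrt (G x) with ht
    rw [haf, hbG]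
    field_simp
    ring
end

section
/- Analytic core of Proposition 1.5 (ill-posedness when the reversing diffusion explodes, one-dimensional case): Let E ⊆ ℝ be a nonempty open interval with left endpoint α ∈ ℝ ∪ {−∞}, let p, c : E → (0,∞) be such that f := p·c is C² on E. Suppose F(x) := ∫_{E ∩ (−∞,x)} 1/f(t) dt is finite for every x ∈ E, that L := ∫_E 1/f < ∞, and that g := (1/4) f'' − (1/8) f'²/f is Lebesgue integrable on E. For ε > 0 set u := √f and v_ε := √(ε + F). Then for every ε > 0: −∫_E (1/2) c(x) ((u v_ε)''(x)/((u v_ε)(x))) p(x) dx = −∫_E g(x) dx + 1/(8ε) − 1/(8(ε + L)); in particular this quantity tends to +∞ as ε ↓ 0. -/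
/-!
With `w = √f · √(ε + F)` and `F' = 1/f` one has `w' = w k` for
`k = (f' (ε + F) + 1) / (2 f (ε + F))`, hence
`w''/w = k' + k² = f''/(2f) - (f'/(2f))² - (1/(2f(ε + F)))²`.
Since `pc = f`, the integrand is `g - (1/8) (1/f) / (ε + F)²`, and the last term is the derivative
of `-1/(ε + F)`. As `F` increases from `0` to `L` across `E`, its integral over `E` is
`1/ε - 1/(ε + L)`; the boundary values are reached along an exhaustion of `E` by compact intervals.
-/

open MeasureTheory Filter Set Topology

lemma setIntegral_inter_Iio_eq_add_intervalIntegral {E : Set ℝ} {φ : ℝ → ℝ}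
    (hφ : IntegrableOn φ E) {x y : ℝ} (hxy : uIcc x y ⊆ E) :
    ∫ t in E ∩ Iio y, φ t = (∫ t in E ∩ Iio x, φ t) + ∫ t in x..y, φ t := by
  wlog hle : x ≤ y generalizing x y
  · have := this (x := y) (y := x) (by rwa [uIcc_comm]) (le_of_not_ge hle)
    rw [intervalIntegral.integral_symm]
    linarith
  have hIco : Ico x y ⊆ E := Ico_subset_Icc_self.trans (uIcc_of_le hle ▸ hxy)
  have hdisj : Disjoint (E ∩ Iio x) (Ico x y) :=
    disjoint_left.2 fun t ht ht' => not_le.2 ht.2 ht'.1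
  rw [← Iio_union_Ico_eq_Iio hle, inter_union_distrib_left, inter_eq_right.2 hIco,
    setIntegral_union hdisj measurableSet_Ico
      (hφ.mono_set inter_subset_left) (hφ.mono_set hIco),
    intervalIntegral.integral_of_le hle, integral_Ico_eq_integral_Ioc]

lemma hasDerivAt_setIntegral_inter_Iio {E : Set ℝ} (hE : IsOpen E) (hconn : E.OrdConnected)
    {φ : ℝ → ℝ} (hφ : IntegrableOn φ E) {x : ℝ} (hx : x ∈ E) (hφx : ContinuousAt φ x) :
    HasDerivAt (fun y => ∫ t in E ∩ Iio y, φ t) (φ x) x := by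
  have hev : (fun y => ∫ t in E ∩ Iio y, φ t) =ᶠ[𝓝 x]
      fun y => (∫ t in E ∩ Iio x, φ t) + ∫ t in x..y, φ t := by
    filter_upwards [hE.mem_nhds hx] with y hy using
      setIntegral_inter_Iio_eq_add_intervalIntegral hφ (hconn.uIcc_subset hx hy)
  refine hev.hasDerivAt_iff.2 ((intervalIntegral.integral_hasDerivAt_right
    IntervalIntegrable.refl ?_ hφx).const_add _)
  exact AEStronglyMeasurable.stronglyMeasurableAtFilter_of_mem hφ.aestronglyMeasurable
    (hE.mem_nhds hx)

structure IsIccExhaustion (E : Set ℝ) (a b : ℕ → ℝ) : Prop where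
  antitone : Antitone a
  monotone : Monotone b
  le : ∀ n, a n ≤ b n
  iUnion_Icc : ⋃ n, Icc (a n) (b n) = E

lemma IsOpen.exists_rat_lt_rat_gt {E : Set ℝ} (hE : IsOpen E) {t : ℝ} (ht : t ∈ E) :
    ∃ q₁ q₂ : ℚ, (q₁ : ℝ) ∈ E ∧ (q₂ : ℝ) ∈ E ∧ (q₁ : ℝ) < t ∧ t < q₂ := by
  obtain ⟨δ, hδ, hball⟩ := Metric.isOpen_iff.1 hE t ht
  rw [Real.ball_eq_Ioo] at hball
  obtain ⟨q₁, hq₁, hq₁t⟩ := exists_rat_btwn (sub_lt_self t hδ)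
  obtain ⟨q₂, htq₂, hq₂⟩ := exists_rat_btwn (lt_add_of_pos_right t hδ)
  exact ⟨q₁, q₂, hball ⟨hq₁, hq₁t.trans (lt_add_of_pos_right t hδ)⟩,
    hball ⟨(sub_lt_self t hδ).trans htq₂, hq₂⟩, hq₁t, htq₂⟩

lemma IsOpen.exists_isIccExhaustion {E : Set ℝ} (hE : IsOpen E) (hconn : E.OrdConnected)
    (hne : E.Nonempty) : ∃ a b, IsIccExhaustion E a b := by
  obtain ⟨t, ht⟩ := hne
  obtain ⟨q, -, hq, -, -, -⟩ := hE.exists_rat_lt_rat_gt ht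
  obtain ⟨r, hr⟩ : ∃ r : ℕ → ℝ, E ∩ range ((↑) : ℚ → ℝ) = range r :=
    ((countable_range _).mono inter_subset_right).exists_eq_range ⟨q, hq, q, rfl⟩
  have hrE (n : ℕ) : r n ∈ E := (hr ▸ mem_range_self n : r n ∈ E ∩ _).1
  have hrat {q : ℚ} (hq : (q : ℝ) ∈ E) : (q : ℝ) ∈ range r := hr ▸ ⟨hq, q, rfl⟩
  set a : ℕ → ℝ := fun n => (Finset.range (n + 1)).inf' Finset.nonempty_range_add_one r
  set b : ℕ → ℝ := fun n => (Finset.range (n + 1)).sup' Finset.nonempty_range_add_one r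
  have ha_le {m n : ℕ} (h : m ≤ n) : a n ≤ r m :=
    Finset.inf'_le r (Finset.mem_range_succ_iff.2 h)
  have hle_b {m n : ℕ} (h : m ≤ n) : r m ≤ b n :=
    Finset.le_sup' r (Finset.mem_range_succ_iff.2 h)
  have haE (n : ℕ) : a n ∈ E := by
    obtain ⟨k, -, hk⟩ := Finset.exists_mem_eq_inf' (Finset.nonempty_range_add_one (n := n)) r
    simpa [a, hk] using hrE k
  have hbE (n : ℕ) : b n ∈ E := by
    obtain ⟨k, -, hk⟩ := Finset.exists_mem_eq_sup' (Finset.nonempty_range_add_one (n := n)) r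
    simpa [b, hk] using hrE k
  refine ⟨a, b, fun m n hmn => ?_, fun m n hmn => ?_, fun n => (ha_le n.zero_le).trans
    (hle_b n.zero_le), subset_antisymm (iUnion_subset fun n => hconn.out (haE n) (hbE n)) ?_⟩
  · exact Finset.inf'_mono r (Finset.range_subset_range.2 (by omega)) _
  · exact Finset.sup'_mono r (Finset.range_subset_range.2 (by omega)) _
  · intro t ht
    obtain ⟨q₁, q₂, hq₁, hq₂, hq₁t, htq₂⟩ := hE.exists_rat_lt_rat_gt ht
    obtain ⟨m₁, hm₁⟩ := hrat hq₁
    obtain ⟨m₂, hm₂⟩ := hrat hq₂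
    refine mem_iUnion.2 ⟨max m₁ m₂, ?_, ?_⟩
    · linarith [ha_le (le_max_left m₁ m₂)]
    · linarith [hle_b (le_max_right m₁ m₂)]

lemma integrableOn_div_add_sq {E : Set ℝ} (hE : MeasurableSet E) {F φ : ℝ → ℝ}
    (hF : ContinuousOn F E) (hφ : IntegrableOn φ E) (hF0 : ∀ x ∈ E, 0 ≤ F x) {ε : ℝ}
    (hε : 0 < ε) : IntegrableOn (fun x => φ x / (ε + F x) ^ 2) E := by
  have hpos : ∀ x ∈ E, 0 < ε + F x := fun x hx => by linarith [hF0 x hx]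
  have hmeas : AEStronglyMeasurable (fun x => φ x / (ε + F x) ^ 2) (volume.restrict E) :=
    hφ.aestronglyMeasurable.mul (ContinuousOn.aestronglyMeasurable
      (((continuousOn_const.add hF).pow 2).inv₀ fun x hx => (pow_pos (hpos x hx) 2).ne') hE)
  refine (hφ.norm.div_const (ε ^ 2)).mono' hmeas ((ae_restrict_iff' hE).2
    (Eventually.of_forall fun x hx => ?_))
  rw [norm_div, norm_pow, Real.norm_of_nonneg (hpos x hx).le]
  gcongr
  linarith [hF0 x hx]

namespace IsIccExhaustion

variable {E : Set ℝ} {a b : ℕ → ℝ}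

lemma Icc_subset (h : IsIccExhaustion E a b) (n : ℕ) : Icc (a n) (b n) ⊆ E :=
  h.iUnion_Icc ▸ subset_iUnion (fun n => Icc (a n) (b n)) n

lemma measurableSet (h : IsIccExhaustion E a b) : MeasurableSet E :=
  h.iUnion_Icc ▸ MeasurableSet.iUnion fun _ => measurableSet_Icc

lemma tendsto_setIntegral_Icc (h : IsIccExhaustion E a b) {φ : ℝ → ℝ} (hφ : IntegrableOn φ E) :
    Tendsto (fun n => ∫ x in Icc (a n) (b n), φ x) atTop (𝓝 (∫ x in E, φ x)) := by
  have := tendsto_setIntegral_of_monotone (fun _ => measurableSet_Icc)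
    (fun m n hmn => Icc_subset_Icc (h.antitone hmn) (h.monotone hmn)) (h.iUnion_Icc ▸ hφ)
  rwa [h.iUnion_Icc] at this

lemma tendsto_setIntegral_inter_Iio_left (h : IsIccExhaustion E a b) {φ : ℝ → ℝ}
    (hφ : IntegrableOn φ E) : Tendsto (fun n => ∫ x in E ∩ Iio (a n), φ x) atTop (𝓝 0) := by
  have hempty : ⋂ n, E ∩ Iio (a n) = ∅ := by
    refine eq_empty_of_forall_notMem fun t ht => ?_
    obtain ⟨n, hn⟩ := mem_iUnion.1 (h.iUnion_Icc ▸ (mem_iInter.1 ht 0).1)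
    exact (mem_iInter.1 ht n).2.not_ge hn.1
  simpa [hempty] using tendsto_setIntegral_of_antitone
    (fun n => h.measurableSet.inter measurableSet_Iio)
    (fun m n hmn => inter_subset_inter_right _ (Iio_subset_Iio (h.antitone hmn)))
    ⟨0, hφ.mono_set inter_subset_left⟩

lemma tendsto_sub_of_hasDerivAt (h : IsIccExhaustion E a b) {G G' : ℝ → ℝ}
    (hG : ∀ x ∈ E, HasDerivAt G (G' x) x) (hG' : IntegrableOn G' E) :
    Tendsto (fun n => G (b n) - G (a n)) atTop (𝓝 (∫ x in E, G' x)) := by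
  refine (h.tendsto_setIntegral_Icc hG').congr fun n => ?_
  have hsub : uIcc (a n) (b n) ⊆ E := uIcc_of_le (h.le n) ▸ h.Icc_subset n
  rw [integral_Icc_eq_integral_Ioc, ← intervalIntegral.integral_of_le (h.le n)]
  exact intervalIntegral.integral_eq_sub_of_hasDerivAt (fun x hx => hG x (hsub hx))
    (hG'.mono_set hsub).intervalIntegrable

lemma tendsto_setIntegral_inter_Iio_right (h : IsIccExhaustion E a b) {φ : ℝ → ℝ}
    (hφ : IntegrableOn φ E) :
    Tendsto (fun n => ∫ t in E ∩ Iio (b n), φ t) atTop (𝓝 (∫ t in E, φ t)) := by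
  have hsplit (n : ℕ) : ∫ t in E ∩ Iio (b n), φ t =
      (∫ t in E ∩ Iio (a n), φ t) + ∫ t in Icc (a n) (b n), φ t := by
    rw [setIntegral_inter_Iio_eq_add_intervalIntegral hφ (uIcc_of_le (h.le n) ▸ h.Icc_subset n),
      intervalIntegral.integral_of_le (h.le n), integral_Icc_eq_integral_Ioc]
  simpa [hsplit] using
    (h.tendsto_setIntegral_inter_Iio_left hφ).add (h.tendsto_setIntegral_Icc hφ)

lemma integral_div_add_sq (h : IsIccExhaustion E a b)
    {F φ : ℝ → ℝ} (hF : ∀ x ∈ E, HasDerivAt F (φ x) x) (hφ : IntegrableOn φ E)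
    (hF0 : ∀ x ∈ E, 0 ≤ F x) {A B : ℝ} (hFa : Tendsto (fun n => F (a n)) atTop (𝓝 A))
    (hFb : Tendsto (fun n => F (b n)) atTop (𝓝 B)) {ε : ℝ} (hε : 0 < ε) :
    ∫ x in E, φ x / (ε + F x) ^ 2 = 1 / (ε + A) - 1 / (ε + B) := by
  have hA : 0 < ε + A := by
    linarith [ge_of_tendsto' hFa fun n => hF0 _ (h.Icc_subset n ⟨le_rfl, h.le n⟩)]
  have hB : 0 < ε + B := by
    linarith [ge_of_tendsto' hFb fun n => hF0 _ (h.Icc_subset n ⟨h.le n, le_rfl⟩)]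
  have hG : ∀ x ∈ E, HasDerivAt (fun y => -(ε + F y)⁻¹) (φ x / (ε + F x) ^ 2) x := fun x hx =>
    (((hF x hx).const_add ε).inv (by linarith [hF0 x hx])).neg.congr_deriv (by ring)
  have hint := integrableOn_div_add_sq h.measurableSet
    (fun x hx => (hF x hx).continuousAt.continuousWithinAt) hφ hF0 hε
  refine tendsto_nhds_unique (h.tendsto_sub_of_hasDerivAt hG hint) ?_
  convert ((hFb.const_add ε).inv₀ hB.ne').neg.sub ((hFa.const_add ε).inv₀ hA.ne').neg using 2
  ring

end IsIccExhaustion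

lemma ContDiffOn.hasDerivAt_deriv {f : ℝ → ℝ} {s : Set ℝ} {n : WithTop ℕ∞}
    (hf : ContDiffOn ℝ n f s) (hs : IsOpen s) (hn : n ≠ 0) {x : ℝ} (hx : x ∈ s) :
    HasDerivAt f (deriv f x) x :=
  ((hf.differentiableOn hn).differentiableAt (hs.mem_nhds hx)).hasDerivAt

lemma HasDerivAt.sqrt_mul_sqrt {f H : ℝ → ℝ} {f' H' x : ℝ} (hf : HasDerivAt f f' x)
    (hH : HasDerivAt H H' x) (hfx : 0 < f x) (hHx : 0 < H x) :
    HasDerivAt (fun y => √(f y) * √(H y))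
      (√(f x) * √(H x) * (f' / (2 * f x) + H' / (2 * H x))) x := by
  refine ((hf.sqrt hfx.ne').fun_mul (hH.sqrt hHx.ne')).congr_deriv ?_
  have : 0 < √(f x) := Real.sqrt_pos.2 hfx
  have : 0 < √(H x) := Real.sqrt_pos.2 hHx
  field_simp
  rw [Real.sq_sqrt hfx.le, Real.sq_sqrt hHx.le]
  ring

lemma deriv_deriv_eq_of_hasDerivAt_mul_self {w k : ℝ → ℝ} {k' x : ℝ} {U : Set ℝ}
    (hU : U ∈ 𝓝 x) (hw : ∀ y ∈ U, HasDerivAt w (w y * k y) y) (hk : HasDerivAt k k' x) :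
    deriv (deriv w) x = w x * (k' + k x ^ 2) := by
  have hderiv : deriv w =ᶠ[𝓝 x] fun y => w y * k y := by
    filter_upwards [hU] with y hy using (hw y hy).deriv
  rw [hderiv.deriv_eq, ((hw x (mem_of_mem_nhds hU)).fun_mul hk).deriv]
  ring

lemma deriv_deriv_sqrt_mul_sqrt_div {f f' H : ℝ → ℝ} {f'' x : ℝ} {U : Set ℝ} (hU : U ∈ 𝓝 x)
    (hf : ∀ y ∈ U, HasDerivAt f (f' y) y) (hf' : HasDerivAt f' f'' x)
    (hH : ∀ y ∈ U, HasDerivAt H (1 / f y) y) (hfpos : ∀ y ∈ U, 0 < f y)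
    (hHpos : ∀ y ∈ U, 0 < H y) :
    deriv (deriv fun y => √(f y) * √(H y)) x / (√(f x) * √(H x)) =
      f'' / (2 * f x) - (f' x / (2 * f x)) ^ 2 - (1 / (2 * f x * H x)) ^ 2 := by
  have hx := mem_of_mem_nhds hU
  have hfx := hfpos x hx
  have hHx := hHpos x hx
  have hw : ∀ y ∈ U, HasDerivAt (fun y => √(f y) * √(H y))
      (√(f y) * √(H y) * ((f' y * H y + 1) / (2 * (f y * H y)))) y := fun y hy =>
    ((hf y hy).sqrt_mul_sqrt (hH y hy) (hfpos y hy) (hHpos y hy)).congr_deriv (by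
      have := hfpos y hy
      have := hHpos y hy
      field_simp)
  have hk := ((hf'.fun_mul (hH x hx)).fun_add (hasDerivAt_const x (1 : ℝ))).fun_div
    (((hf x hx).fun_mul (hH x hx)).const_mul 2) (by positivity)
  rw [deriv_deriv_eq_of_hasDerivAt_mul_self hU hw hk, mul_div_cancel_left₀ _ (by positivity)]
  field_simp
  ring

lemma setIntegral_pos_of_isOpen {X : Type*} [TopologicalSpace X] [MeasurableSpace X]
    [OpensMeasurableSpace X] {μ : Measure X} [μ.IsOpenPosMeasure] {E : Set X} (hE : IsOpen E)
    (hne : E.Nonempty) {φ : X → ℝ} (hφ : ∀ x ∈ E, 0 < φ x) (hint : IntegrableOn φ E μ) :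
    0 < ∫ x in E, φ x ∂μ := by
  rw [setIntegral_pos_iff_support_of_nonneg_ae ((ae_restrict_iff' hE.measurableSet).2
    (Eventually.of_forall fun x hx => (hφ x hx).le)) hint]
  exact (hE.measure_pos μ hne).trans_le (measure_mono fun x hx => ⟨(hφ x hx).ne', hx⟩)

lemma tendsto_nhdsGT_zero_atTop_of_eq_add_one_div_sub_one_div {I : ℝ → ℝ} {C L : ℝ}
    (hL : L ≠ 0) (hI : ∀ ε : ℝ, 0 < ε → I ε = C + 1 / (8 * ε) - 1 / (8 * (ε + L))) :
    Tendsto I (𝓝[>] 0) atTop := by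
  have h₁ : Tendsto (fun ε : ℝ => 1 / (8 * ε)) (𝓝[>] 0) atTop := by
    simpa [mul_comm] using tendsto_inv_nhdsGT_zero.atTop_mul_const (by norm_num : (0 : ℝ) < 8⁻¹)
  have h₂ : Tendsto (fun ε : ℝ => C - 1 / (8 * (ε + L))) (𝓝[>] 0) (𝓝 (C - 1 / (8 * (0 + L)))) :=
    (continuousAt_const.sub (continuousAt_const.div (by fun_prop) (by simpa using hL))).tendsto
      |>.mono_left nhdsWithin_le_nhds
  exact (h₁.atTop_add h₂).congr' (eventually_nhdsWithin_of_forall fun ε hε => by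
    rw [hI ε hε]
    ring)

theorem explosive_reversing_growth_blowup_general (E : Set ℝ) (hE : IsOpen E)
    (hne : E.Nonempty) (hconn : E.OrdConnected)
    (p c : ℝ → ℝ) (hp : ∀ x ∈ E, 0 < p x) (hc : ∀ x ∈ E, 0 < c x)
    (f : ℝ → ℝ) (hf : ∀ x ∈ E, f x = p x * c x) (hf2 : ContDiffOn ℝ 2 f E)
    (F : ℝ → ℝ) (hF : ∀ x, F x = ∫ t in E ∩ Set.Iio x, 1 / f t)
    (L : ℝ) (hL : L = ∫ t in E, 1 / f t)
    (hLfin : IntegrableOn (fun t => 1 / f t) E)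
    (g : ℝ → ℝ)
    (hg : ∀ x ∈ E, g x = (1/4) * deriv (deriv f) x - (1/8) * (deriv f x)^2 / f x)
    (hgint : IntegrableOn g E) :
    (∀ ε : ℝ, 0 < ε →
      -(∫ x in E, (1/2) * c x *
          (deriv (deriv (fun y => Real.sqrt (f y) * Real.sqrt (ε + F y))) x /
            (Real.sqrt (f x) * Real.sqrt (ε + F x))) * p x)
      = -(∫ x in E, g x) + 1 / (8 * ε) - 1 / (8 * (ε + L))) ∧
    Filter.Tendsto (fun ε : ℝ =>
      -(∫ x in E, (1/2) * c x *
          (deriv (deriv (fun y => Real.sqrt (f y) * Real.sqrt (ε + F y))) x /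
            (Real.sqrt (f x) * Real.sqrt (ε + F x))) * p x))
      (nhdsWithin 0 (Set.Ioi 0)) Filter.atTop := by
  have hfpos : ∀ x ∈ E, 0 < f x := fun x hx => hf x hx ▸ mul_pos (hp x hx) (hc x hx)
  have hf' : ∀ x ∈ E, HasDerivAt f (deriv f x) x := fun x =>
    hf2.hasDerivAt_deriv hE two_ne_zero
  have hf'' : ∀ x ∈ E, HasDerivAt (deriv f) (deriv (deriv f) x) x := fun x =>
    (hf2.deriv_of_isOpen hE (by norm_num : (1 : WithTop ℕ∞) + 1 ≤ 2)).hasDerivAt_deriv hE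
      one_ne_zero
  have hFderiv : ∀ x ∈ E, HasDerivAt F (1 / f x) x := fun x hx => funext hF ▸
    hasDerivAt_setIntegral_inter_Iio hE hconn hLfin hx
      (continuousAt_const.div (hf' x hx).continuousAt (hfpos x hx).ne')
  have hF0 : ∀ x, 0 ≤ F x := fun x => hF x ▸ setIntegral_nonneg
    (hE.measurableSet.inter measurableSet_Iio) fun t ht => (one_div_pos.2 (hfpos t ht.1)).le
  obtain ⟨a, b, hab⟩ := hE.exists_isIccExhaustion hconn hne
  have hFa : Tendsto (fun n => F (a n)) atTop (𝓝 0) := by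
    simpa only [hF] using hab.tendsto_setIntegral_inter_Iio_left hLfin
  have hFb : Tendsto (fun n => F (b n)) atTop (𝓝 L) := by
    simpa only [hF, hL] using hab.tendsto_setIntegral_inter_Iio_right hLfin
  have hLpos : 0 < L :=
    hL ▸ setIntegral_pos_of_isOpen hE hne (fun x hx => one_div_pos.2 (hfpos x hx)) hLfin
  refine ⟨?key, tendsto_nhdsGT_zero_atTop_of_eq_add_one_div_sub_one_div hLpos.ne' ?key⟩
  intro ε hε
  have hpt : ∀ x ∈ E, (1/2) * c x *
      (deriv (deriv (fun y => Real.sqrt (f y) * Real.sqrt (ε + F y))) x /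
        (Real.sqrt (f x) * Real.sqrt (ε + F x))) * p x =
      g x - 1 / 8 * (1 / f x / (ε + F x) ^ 2) := fun x hx => by
    have := hF0 x
    rw [deriv_deriv_sqrt_mul_sqrt_div (hE.mem_nhds hx) hf' (hf'' x hx)
      (fun y hy => (hFderiv y hy).const_add ε) hfpos (fun y _ => by linarith [hF0 y]), hg x hx,
      hf x hx]
    field_simp [(hp x hx).ne', (hc x hx).ne']
    ring
  have hint := integrableOn_div_add_sq hE.measurableSet
    (fun x hx => (hFderiv x hx).continuousAt.continuousWithinAt) hLfin (fun x _ => hF0 x) hε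
  rw [setIntegral_congr_fun hE.measurableSet hpt, integral_sub hgint (hint.const_mul _),
    integral_const_mul, hab.integral_div_add_sq hFderiv hLfin (fun x _ => hF0 x) hFa hFb hε]
  field_simp
  ring

/-- Analytic core of Proposition 1.5 (ill-posedness when the reversing
diffusion explodes, one-dimensional case): with `f = pc`, `u = √f`,
`v_ε = √(ε + F)` where `F(x) = ∫_{E∩(−∞,x)} 1/f` and `L = ∫_E 1/f < ∞`,
one has `−∫_E (1/2) c ((u v_ε)''/(u v_ε)) p = −∫_E g + 1/(8ε) − 1/(8(ε+L))`,
which tends to `+∞` as `ε ↓ 0`. -/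
theorem explosive_reversing_growth_blowup (E : Set ℝ) (hE : IsOpen E)
    (hne : E.Nonempty) (hconn : E.OrdConnected)
    (p c : ℝ → ℝ) (hp : ∀ x ∈ E, 0 < p x) (hc : ∀ x ∈ E, 0 < c x)
    (f : ℝ → ℝ) (hf : ∀ x ∈ E, f x = p x * c x) (hf2 : ContDiffOn ℝ 2 f E)
    (F : ℝ → ℝ) (hF : ∀ x, F x = ∫ t in E ∩ Set.Iio x, 1 / f t)
    (hFfin : ∀ x ∈ E, IntegrableOn (fun t => 1 / f t) (E ∩ Set.Iio x))
    (L : ℝ) (hL : L = ∫ t in E, 1 / f t)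
    (hLfin : IntegrableOn (fun t => 1 / f t) E)
    (g : ℝ → ℝ)
    (hg : ∀ x ∈ E, g x = (1/4) * deriv (deriv f) x - (1/8) * (deriv f x)^2 / f x)
    (hgint : IntegrableOn g E) :
    (∀ ε : ℝ, 0 < ε →
      -(∫ x in E, (1/2) * c x *
          (deriv (deriv (fun y => Real.sqrt (f y) * Real.sqrt (ε + F y))) x /
            (Real.sqrt (f x) * Real.sqrt (ε + F x))) * p x)
      = -(∫ x in E, g x) + 1 / (8 * ε) - 1 / (8 * (ε + L))) ∧
    Filter.Tendsto (fun ε : ℝ =>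
      -(∫ x in E, (1/2) * c x *
          (deriv (deriv (fun y => Real.sqrt (f y) * Real.sqrt (ε + F y))) x /
            (Real.sqrt (f x) * Real.sqrt (ε + F x))) * p x))
      (nhdsWithin 0 (Set.Ioi 0)) Filter.atTop :=
  explosive_reversing_growth_blowup_general E hE hne hconn p c hp hc f hf hf2 F hF L hL hLfin g hg
    hgint
end

section
/- The robust growth rate in the Cox–Ingersoll–Ross example: let A > 1, B > 0 and ξ > 0, and define f : (0,∞) → (0,∞) by f(x) = ξ² (B^A / Γ(A)) x^A e^{−Bx}, where Γ is the Gamma function (so f = p·c with p the Gamma(A,B) density and c(x) = ξ² x). Then (1/8) ∫_0^∞ f'(x)² / f(x) dx = ξ² A B / (8 (A − 1)). -/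
open MeasureTheory Real Set

/-
Write `f = C g` with `g(x) = x^A e^{-Bx}` and `C = ξ² B^A / Γ(A)`. Since `f'/f = A/x - B`,
we get `f'^2/f = C (A/x - B)^2 g`.
Expanding the square, the integral is a combination of three Euler integrals
`∫_0^∞ x^{s-1} e^{-Bx} dx = Γ(s)/B^s` with `s = A - 1, A, A + 1`, and the recurrence
`Γ(s+1) = s Γ(s)` collapses it to `A Γ(A-1) / B^{A-1}`.
-/

lemma HasDerivAt.deriv_sq_div_self {𝕜 : Type*} [NontriviallyNormedField 𝕜] {f : 𝕜 → 𝕜}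
    {g x : 𝕜} (hf : HasDerivAt f (g * f x) x) :
    _root_.deriv f x ^ 2 / f x = g ^ 2 * f x := by
  rw [hf.deriv, mul_pow, sq (f x), mul_div_assoc, mul_self_div_self]

lemma hasDerivAt_const_mul_rpow_mul_exp_neg_mul (c a b : ℝ) {x : ℝ} (hx : 0 < x) :
    HasDerivAt (fun y : ℝ => c * y ^ a * exp (-b * y))
      ((a / x - b) * (c * x ^ a * exp (-b * x))) x := by
  have hpow : HasDerivAt (fun y : ℝ => y ^ a) (a * x ^ (a - 1)) x :=
    hasDerivAt_rpow_const (Or.inl hx.ne')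
  have hexp : HasDerivAt (fun y : ℝ => exp (-b * y)) (exp (-b * x) * (-b * 1)) x :=
    ((hasDerivAt_id x).const_mul (-b)).exp
  refine ((hpow.const_mul c).mul hexp).congr_deriv ?_
  rw [rpow_sub_one hx.ne']
  field_simp
  ring

lemma Real.Gamma_eq_sub_one_mul_Gamma_sub_one {s : ℝ} (hs : s ≠ 1) :
    Gamma s = (s - 1) * Gamma (s - 1) := by
  simpa using Gamma_add_one (sub_ne_zero.mpr hs)

lemma integrableOn_rpow_sub_one_mul_exp_neg_mul_Ioi {a r : ℝ} (ha : 0 < a) (hr : 0 < r) :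
    IntegrableOn (fun t : ℝ => t ^ (a - 1) * exp (-(r * t))) (Ioi 0) :=
  .of_integral_ne_zero (by rw [integral_rpow_mul_exp_neg_mul_Ioi ha hr]; positivity)

lemma integral_div_sub_sq_mul_rpow_mul_exp_neg_mul_Ioi {a b : ℝ} (ha : 1 < a) (hb : 0 < b) :
    ∫ x in Ioi 0, (a / x - b) ^ 2 * (x ^ a * exp (-b * x)) = a * Gamma (a - 1) / b ^ (a - 1) := by
  set k : ℝ → ℝ → ℝ := fun s t => t ^ (s - 1) * exp (-(b * t)) with hk
  have hint : ∀ c s, 0 < s → IntegrableOn (fun x => c * k s x) (Ioi 0) := fun c s hs =>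
    (integrableOn_rpow_sub_one_mul_exp_neg_mul_Ioi hs hb).const_mul c
  have hexpand : EqOn (fun x => (a / x - b) ^ 2 * (x ^ a * exp (-b * x)))
      (fun x => a ^ 2 * k (a - 1) x - 2 * a * b * k a x + b ^ 2 * k (a + 1) x) (Ioi 0) := by
    intro x (hx : 0 < x)
    simp only [hk, sub_sub, one_add_one_eq_two, add_sub_cancel_right, rpow_sub hx, rpow_two,
      rpow_one, neg_mul]
    field_simp
    ring
  have h₁ := hint (a ^ 2) (a - 1) (by linarith)
  have h₂ := hint (2 * a * b) a (by linarith)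
  have h₃ := hint (b ^ 2) (a + 1) (by linarith)
  have hpow : ∀ s : ℝ, (1 / b) ^ (s + 1) = (1 / b) ^ s / b := fun s => by
    rw [rpow_add_one (by positivity)]; ring
  have hpow' : (1 / b) ^ a = (1 / b) ^ (a - 1) / b := by rw [← hpow, sub_add_cancel]
  rw [setIntegral_congr_fun measurableSet_Ioi hexpand, integral_add
    (f := fun x => a ^ 2 * k (a - 1) x - 2 * a * b * k a x) (Integrable.sub h₁ h₂) h₃,
    integral_sub h₁ h₂, integral_const_mul, integral_const_mul, integral_const_mul,
    integral_rpow_mul_exp_neg_mul_Ioi (by linarith) hb,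
    integral_rpow_mul_exp_neg_mul_Ioi (by linarith) hb,
    integral_rpow_mul_exp_neg_mul_Ioi (by linarith) hb,
    Gamma_add_one (by positivity), Gamma_eq_sub_one_mul_Gamma_sub_one ha.ne', hpow, hpow',
    div_rpow zero_le_one hb.le, one_rpow]
  field_simp
  ring

lemma integral_deriv_sq_div_const_mul_rpow_mul_exp_neg_mul_Ioi (c : ℝ) {a b : ℝ} (ha : 1 < a)
    (hb : 0 < b) :
    ∫ x in Ioi 0, deriv (fun y => c * y ^ a * exp (-b * y)) x ^ 2 / (c * x ^ a * exp (-b * x)) =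
      c * (a * Gamma (a - 1) / b ^ (a - 1)) := by
  rw [← integral_div_sub_sq_mul_rpow_mul_exp_neg_mul_Ioi ha hb, ← integral_const_mul]
  refine setIntegral_congr_fun measurableSet_Ioi fun x (hx : 0 < x) => ?_
  rw [(hasDerivAt_const_mul_rpow_mul_exp_neg_mul c a b hx).deriv_sq_div_self]
  ring

theorem cir_growth_rate_general (A B ξ : ℝ) (hA : 1 < A) (hB : 0 < B) :
    (1/8) * ∫ x in Set.Ioi (0:ℝ),
        (deriv (fun y : ℝ =>
          ξ^2 * (B ^ A / Real.Gamma A) * y ^ A * Real.exp (-B * y)) x)^2 /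
        (ξ^2 * (B ^ A / Real.Gamma A) * x ^ A * Real.exp (-B * x))
    = ξ^2 * A * B / (8 * (A - 1)) := by
  have hΓ : 0 < Gamma (A - 1) := Gamma_pos_of_pos (by linarith)
  have hA' : A - 1 ≠ 0 := sub_ne_zero.mpr hA.ne'
  have hBA : B ^ A = B ^ (A - 1) * B := by rw [← rpow_add_one hB.ne', sub_add_cancel]
  rw [integral_deriv_sq_div_const_mul_rpow_mul_exp_neg_mul_Ioi _ hA hB,
    Gamma_eq_sub_one_mul_Gamma_sub_one hA.ne', hBA]
  field_simp

/-- The robust growth rate in the Cox–Ingersoll–Ross example: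
with `f(x) = ξ² (B^A/Γ(A)) x^A e^{−Bx}`,
`(1/8) ∫_0^∞ f'(x)²/f(x) dx = ξ² A B / (8(A−1))`. -/
theorem cir_growth_rate (A B ξ : ℝ) (hA : 1 < A) (hB : 0 < B) (hξ : 0 < ξ) :
    (1/8) * ∫ x in Set.Ioi (0:ℝ),
        (deriv (fun y : ℝ =>
          ξ^2 * (B ^ A / Real.Gamma A) * y ^ A * Real.exp (-B * y)) x)^2 /
        (ξ^2 * (B ^ A / Real.Gamma A) * x ^ A * Real.exp (-B * x))
    = ξ^2 * A * B / (8 * (A - 1)) :=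
  cir_growth_rate_general A B ξ hA hB
end

section
/- Uniform ellipticity lower bound for θ (Lemma B.1(2)): let d ≥ 2 and A, B, C ∈ ℝ with C ≥ 0, B ≤ A < 2B and A + C ≥ 2, and let θ be as defined below. Then for every x ∈ (0,∞)^d with x_l ≤ 1 for all l, and every ξ ∈ ℝ^d: ξᵀ θ(x) ξ ≥ k(x) · |ξ|², where k(x) := (∏_{l=1}^d x_l^C) · (1 − (max_l x_l)^{2B−A}) · min{1, (min_l x_l)^A}. -/
/-- The matrix-valued function `θ` of Lemma B.1. -/
noncomputable def thetaMat (d : ℕ) (A B C : ℝ) (x : Fin d → ℝ) :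
    Matrix (Fin d) (Fin d) ℝ :=
  fun i j => if i = j then x i ^ A * ∏ l, x l ^ C
    else x i ^ B * x j ^ B * ∏ l, x l ^ (A + C - B)

/-- Uniform ellipticity lower bound for `θ` (Lemma B.1(2)):
`ξᵀ θ(x) ξ ≥ k(x) |ξ|²` with
`k(x) = (∏_l x_l^C)(1 − (max_l x_l)^{2B−A}) min{1, (min_l x_l)^A}`. -/
theorem thetaMat_ellipticity (d : ℕ) (hd : 2 ≤ d) (A B C : ℝ)
    (hC : 0 ≤ C) (hBA : B ≤ A) (hA2B : A < 2 * B) (hAC : 2 ≤ A + C)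
    (x : Fin d → ℝ) (hx : ∀ l, 0 < x l) (hx1 : ∀ l, x l ≤ 1) (ξ : Fin d → ℝ) :
    ∑ i, ∑ j, ξ i * thetaMat d A B C x i j * ξ j
      ≥ ((∏ l, x l ^ C) *
          (1 - (Finset.univ.sup' (Finset.univ_nonempty_iff.mpr ⟨⟨0, by omega⟩⟩) x)
              ^ (2 * B - A)) *
          min 1 ((Finset.univ.inf' (Finset.univ_nonempty_iff.mpr ⟨⟨0, by omega⟩⟩) x)
              ^ A)) * ∑ i, (ξ i) ^ 2 := by
  have hne : (Finset.univ : Finset (Fin d)).Nonempty :=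
    Finset.univ_nonempty_iff.mpr ⟨⟨0, by omega⟩⟩
  set mx := Finset.univ.sup' (Finset.univ_nonempty_iff.mpr ⟨⟨0, by omega⟩⟩) x with hmx
  set mn := Finset.univ.inf' (Finset.univ_nonempty_iff.mpr ⟨⟨0, by omega⟩⟩) x with hmn
  have hB : 0 < B := by linarith
  have hA : 0 < A := by linarith
  set P : ℝ := ∏ l, x l ^ C with hP
  set M : ℝ := ∏ l, x l ^ (A - B) with hM
  have hPpos : 0 < P := Finset.prod_pos fun l _ => Real.rpow_pos_of_pos (hx l) _
  have hMpos : 0 < M := Finset.prod_pos fun l _ => Real.rpow_pos_of_pos (hx l) _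
  have hM1 : M ≤ 1 :=
    Finset.prod_le_one (fun l _ => (Real.rpow_pos_of_pos (hx l) _).le)
      (fun l _ => Real.rpow_le_one (hx l).le (hx1 l) (by linarith))
  have hmxpos : 0 < mx := lt_of_lt_of_le (hx (hne.choose))
    (Finset.le_sup' x (Finset.mem_univ _))
  have hmx1 : mx ≤ 1 := Finset.sup'_le _ _ fun l _ => hx1 l
  have hmnpos : 0 < mn := by
    rw [hmn, Finset.lt_inf'_iff]
    exact fun l _ => hx l
  have hmx2BA : mx ^ (2 * B - A) ≤ 1 :=
    Real.rpow_le_one hmxpos.le hmx1 (by linarith)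
  have hprodsplit : (∏ l, x l ^ (A + C - B)) = P * M := by
    rw [hP, hM, ← Finset.prod_mul_distrib]
    refine Finset.prod_congr rfl fun l _ => ?_
    rw [← Real.rpow_add (hx l)]
    ring_nf
  have key : ∀ i j, ξ i * thetaMat d A B C x i j * ξ j
      = (ξ i * x i ^ B) * (ξ j * x j ^ B) * (P * M)
        + (if i = j then ξ i ^ 2 * (x i ^ A * P - x i ^ B * x i ^ B * (P * M)) else 0) := by
    intro i j
    unfold thetaMat
    by_cases h : i = j
    · subst h; simp only [eq_self_iff_true, if_true]; ring
    · simp only [if_neg h, hprodsplit]; ring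
  have hsum : ∑ i, ∑ j, ξ i * thetaMat d A B C x i j * ξ j
      = (∑ i, ξ i * x i ^ B) ^ 2 * (P * M)
        + ∑ i, ξ i ^ 2 * (x i ^ A * P - x i ^ B * x i ^ B * (P * M)) := by
    simp_rw [key, Finset.sum_add_distrib]
    congr 1
    · rw [sq, Finset.sum_mul_sum, Finset.sum_mul]
      exact Finset.sum_congr rfl fun i _ => by rw [Finset.sum_mul]
    · exact Finset.sum_congr rfl fun i _ => by simp
  have hterm : ∀ i, x i ^ A * P - x i ^ B * x i ^ B * (P * M)
      ≥ P * ((1 - mx ^ (2 * B - A)) * min 1 (mn ^ A)) := by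
    intro i
    have h2B : x i ^ B * x i ^ B = x i ^ A * x i ^ (2 * B - A) := by
      rw [← Real.rpow_add (hx i), ← Real.rpow_add (hx i)]
      ring_nf
    have hle : x i ^ (2 * B - A) * M ≤ mx ^ (2 * B - A) := by
      calc x i ^ (2 * B - A) * M ≤ mx ^ (2 * B - A) * 1 := by
            apply mul_le_mul _ hM1 hMpos.le (Real.rpow_nonneg hmxpos.le _)
            exact Real.rpow_le_rpow (hx i).le (Finset.le_sup' x (Finset.mem_univ i))
              (by linarith)
        _ = mx ^ (2 * B - A) := mul_one _
    have hxiA : min 1 (mn ^ A) ≤ x i ^ A := by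
      refine le_trans (min_le_right _ _) ?_
      exact Real.rpow_le_rpow hmnpos.le (Finset.inf'_le x (Finset.mem_univ i)) hA.le
    have h1 : x i ^ A - x i ^ B * x i ^ B * M ≥ x i ^ A * (1 - mx ^ (2 * B - A)) := by
      rw [h2B]
      have : x i ^ A * (x i ^ (2 * B - A) * M) ≤ x i ^ A * mx ^ (2 * B - A) :=
        mul_le_mul_of_nonneg_left hle (Real.rpow_nonneg (hx i).le _)
      nlinarith
    have h2 : x i ^ A * (1 - mx ^ (2 * B - A))
        ≥ min 1 (mn ^ A) * (1 - mx ^ (2 * B - A)) :=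
      mul_le_mul_of_nonneg_right hxiA (by linarith)
    have h3 : x i ^ A - x i ^ B * x i ^ B * M
        ≥ (1 - mx ^ (2 * B - A)) * min 1 (mn ^ A) := by nlinarith
    nlinarith [mul_le_mul_of_nonneg_left h3 hPpos.le]
  rw [hsum]
  have hsq : 0 ≤ (∑ i, ξ i * x i ^ B) ^ 2 * (P * M) :=
    mul_nonneg (sq_nonneg _) (mul_nonneg hPpos.le hMpos.le)
  have hmain : ∑ i, ξ i ^ 2 * (x i ^ A * P - x i ^ B * x i ^ B * (P * M))
      ≥ (P * (1 - mx ^ (2 * B - A)) * min 1 (mn ^ A)) * ∑ i, ξ i ^ 2 := by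
    rw [Finset.mul_sum]
    apply Finset.sum_le_sum
    intro i _
    calc P * (1 - mx ^ (2 * B - A)) * min 1 (mn ^ A) * ξ i ^ 2
        = ξ i ^ 2 * (P * ((1 - mx ^ (2 * B - A)) * min 1 (mn ^ A))) := by ring
      _ ≤ ξ i ^ 2 * (x i ^ A * P - x i ^ B * x i ^ B * (P * M)) :=
          mul_le_mul_of_nonneg_left (hterm i) (sq_nonneg _)
  linarith
end

section
/- Explicit divergence of θ and the gradient property (Lemma B.1(6)): let d ≥ 2 and A, B, C ∈ ℝ with C ≥ 0, B ≤ A < 2B and A + C ≥ 2, and let θ be as defined below. Then for every x ∈ (0,∞)^d and every i ∈ {1,…,d}: Σ_{j=1}^d ∂_j θ_{ij}(x) = (A+C) ( x_i^{A+C−1} ∏_{l≠i} x_l^C + x_i^{A+C} Σ_{j≠i} x_j^{A+C−1} ∏_{l≠i,j} x_l^{A+C−B} ), and moreover Σ_{j=1}^d θ_{ij}(x) · (A+C)/x_j = Σ_{j=1}^d ∂_j θ_{ij}(x); that is, θ(x)⁻¹ (div θ)(x) equals the gradient of H(x) = (A+C) Σ_{l=1}^d log x_l. -/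
/-! Every entry `θ_ij` is a monomial `∏_l x_l ^ e_l` whose exponent of its column variable `x_j`
is `A + C` (on the diagonal `A + C`, off it `B + (A + C - B)`). Since `∂_j ∏_l x_l ^ e_l` is
`e_j / x_j` times the monomial, `∂_j θ_ij = θ_ij (A + C) / x_j`, which is the gradient property;
the explicit formula for `div θ` is this identity with the powers collected. -/

open Finset Filter

section Monomial

variable {ι : Type*} [Fintype ι] [DecidableEq ι]

theorem fderiv_prod_rpow_apply_single (e : ι → ℝ) {x : ι → ℝ} (hx : ∀ l, x l ≠ 0) (j : ι) :
    fderiv ℝ (fun y : ι → ℝ => ∏ l, y l ^ e l) x (Pi.single j 1)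
      = e j / x j * ∏ l, x l ^ e l := by
  have hfactor : ∀ l ∈ (univ : Finset ι), HasFDerivAt (fun y : ι → ℝ => y l ^ e l)
      ((e l * x l ^ (e l - 1)) • (ContinuousLinearMap.proj l : (ι → ℝ) →L[ℝ] ℝ)) x :=
    fun l _ => by
      exact (Real.hasDerivAt_rpow_const (Or.inl (hx l))).comp_hasFDerivAt x
        (hasFDerivAt_apply (𝕜 := ℝ) l x)
  rw [(HasFDerivAt.finsetProd hfactor).fderiv]
  simp only [_root_.sum_apply, smul_apply, ContinuousLinearMap.proj_apply, smul_eq_mul]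
  rw [sum_eq_single j (fun l _ hl => by simp [Pi.single_eq_of_ne hl]) (by simp),
    Pi.single_eq_same, Real.rpow_sub_one (hx j), ← mul_prod_erase univ _ (mem_univ j)]
  field_simp

theorem prod_rpow_add_single {y : ι → ℝ} (hy : ∀ l, 0 < y l) (e : ι → ℝ) (m : ι) (a : ℝ) :
    ∏ l, y l ^ (e + Pi.single m a : ι → ℝ) l = y m ^ a * ∏ l, y l ^ e l := by
  have hsingle : ∏ l, y l ^ (Pi.single m a : ι → ℝ) l = y m ^ a := by
    rw [prod_eq_single m (fun l _ hl => by simp [Pi.single_eq_of_ne hl]) (by simp),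
      Pi.single_eq_same]
  simp only [Pi.add_apply, Real.rpow_add (hy _), prod_mul_distrib, hsingle, mul_comm]

theorem fderiv_const_mul_sum_log_apply_single (c : ℝ) {x : ι → ℝ} (hx : ∀ l, x l ≠ 0)
    (k : ι) :
    fderiv ℝ (fun y : ι → ℝ => c * ∑ l, Real.log (y l)) x (Pi.single k 1) = c / x k := by
  have hterm : ∀ l ∈ (univ : Finset ι), HasFDerivAt (fun y : ι → ℝ => Real.log (y l))
      ((x l)⁻¹ • (ContinuousLinearMap.proj l : (ι → ℝ) →L[ℝ] ℝ)) x :=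
    fun l _ => by
      exact (Real.hasDerivAt_log (hx l)).comp_hasFDerivAt x (hasFDerivAt_apply (𝕜 := ℝ) l x)
  rw [((HasFDerivAt.fun_sum hterm).const_mul c).fderiv]
  simp only [smul_apply, _root_.sum_apply, ContinuousLinearMap.proj_apply, smul_eq_mul]
  rw [sum_eq_single k (fun l _ hl => by simp [Pi.single_eq_of_ne hl]) (by simp),
    Pi.single_eq_same, mul_one, div_eq_mul_inv]

end Monomial

section Theta

variable {d : ℕ} (A B C : ℝ)

def thetaExp (i j : Fin d) : Fin d → ℝ :=
  if i = j then Function.const _ C + Pi.single i A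
  else Function.const _ (A + C - B) + Pi.single i B + Pi.single j B

theorem thetaMat_eq_prod_rpow {y : Fin d → ℝ} (hy : ∀ l, 0 < y l) (i j : Fin d) :
    thetaMat d A B C y i j = ∏ l, y l ^ thetaExp A B C i j l := by
  unfold thetaMat thetaExp
  split_ifs <;> simp only [prod_rpow_add_single hy, Function.const_apply]
  ring

theorem thetaExp_apply_right (i j : Fin d) : thetaExp A B C i j j = A + C := by
  unfold thetaExp
  split_ifs with hij
  · subst hij
    simp [add_comm]
  · simp [Pi.single_eq_of_ne (Ne.symm hij)]

theorem fderiv_thetaMat_apply_single {x : Fin d → ℝ} (hx : ∀ l, 0 < x l) (i j : Fin d) :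
    fderiv ℝ (fun y => thetaMat d A B C y i j) x (Pi.single j 1)
      = thetaMat d A B C x i j * ((A + C) / x j) := by
  have hmonomial : (fun y => thetaMat d A B C y i j)
      =ᶠ[nhds x] fun y => ∏ l, y l ^ thetaExp A B C i j l := by
    filter_upwards [eventually_all.2 fun l => (continuous_apply l).continuousAt.eventually
      (lt_mem_nhds (hx l))] with y hy
    exact thetaMat_eq_prod_rpow A B C hy i j
  rw [hmonomial.fderiv_eq, fderiv_prod_rpow_apply_single _ (fun l => (hx l).ne') j,
    ← thetaMat_eq_prod_rpow A B C hx, thetaExp_apply_right, mul_comm]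

theorem thetaMat_self_div {x : Fin d → ℝ} (hx : ∀ l, 0 < x l) (i : Fin d) :
    thetaMat d A B C x i i / x i = x i ^ (A + C - 1) * ∏ l ∈ univ.erase i, x l ^ C := by
  rw [thetaMat, if_pos rfl, ← mul_prod_erase univ (fun l => x l ^ C) (mem_univ i),
    Real.rpow_sub_one (hx i).ne', Real.rpow_add (hx i)]
  ring

theorem thetaMat_div_of_ne {x : Fin d → ℝ} (hx : ∀ l, 0 < x l) {i j : Fin d} (hij : i ≠ j) :
    thetaMat d A B C x i j / x j
      = x i ^ (A + C) * (x j ^ (A + C - 1) *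
          ∏ l ∈ (univ.erase i).erase j, x l ^ (A + C - B)) := by
  have hsplit : ∀ l, x l ^ (A + C) = x l ^ B * x l ^ (A + C - B) := fun l => by
    rw [← Real.rpow_add (hx l), add_sub_cancel]
  rw [thetaMat, if_neg hij,
    ← mul_prod_erase univ (fun l => x l ^ (A + C - B)) (mem_univ i),
    ← mul_prod_erase _ (fun l => x l ^ (A + C - B)) (mem_erase.2 ⟨Ne.symm hij, mem_univ j⟩),
    Real.rpow_sub_one (hx j).ne', hsplit i, hsplit j]
  ring

end Theta

theorem thetaMat_divergence_gradient_general (d : ℕ) (A B C : ℝ)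
    (x : Fin d → ℝ) (hx : ∀ l, 0 < x l) (i : Fin d) :
    (∑ j, fderiv ℝ (fun y => thetaMat d A B C y i j) x (Pi.single j 1)
      = (A + C) * (x i ^ (A + C - 1) * ∏ l ∈ Finset.univ.erase i, x l ^ C
        + x i ^ (A + C) * ∑ j ∈ Finset.univ.erase i, x j ^ (A + C - 1) *
            ∏ l ∈ (Finset.univ.erase i).erase j, x l ^ (A + C - B))) ∧
    (∑ j, thetaMat d A B C x i j * ((A + C) / x j)
      = ∑ j, fderiv ℝ (fun y => thetaMat d A B C y i j) x (Pi.single j 1)) ∧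
    (∀ k : Fin d, fderiv ℝ (fun y => (A + C) * ∑ l, Real.log (y l)) x (Pi.single k 1)
      = (A + C) / x k) := by
  have hdiv : ∑ j, fderiv ℝ (fun y => thetaMat d A B C y i j) x (Pi.single j 1)
      = ∑ j, thetaMat d A B C x i j * ((A + C) / x j) :=
    sum_congr rfl fun j _ => fderiv_thetaMat_apply_single A B C hx i j
  refine ⟨?_, hdiv.symm, fderiv_const_mul_sum_log_apply_single _ fun l => (hx l).ne'⟩
  simp_rw [hdiv, mul_div_left_comm _ (A + C), ← mul_sum]
  rw [← add_sum_erase univ _ (mem_univ i), thetaMat_self_div A B C hx,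
    sum_congr rfl fun j hj => thetaMat_div_of_ne A B C hx (Ne.symm (ne_of_mem_erase hj)),
    mul_sum]

/-- Explicit divergence of `θ` and the gradient property (Lemma B.1(6)):
`(div θ)_i` has the displayed explicit form, `θ(x)·((A+C)/x_·) = (div θ)(x)`,
and `(A+C)/x_k` is the gradient of `H(x) = (A+C) Σ_l log x_l`. -/
theorem thetaMat_divergence_gradient (d : ℕ) (hd : 2 ≤ d) (A B C : ℝ)
    (hC : 0 ≤ C) (hBA : B ≤ A) (hA2B : A < 2 * B) (hAC : 2 ≤ A + C)
    (x : Fin d → ℝ) (hx : ∀ l, 0 < x l) (i : Fin d) :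
    (∑ j, fderiv ℝ (fun y => thetaMat d A B C y i j) x (Pi.single j 1)
      = (A + C) * (x i ^ (A + C - 1) * ∏ l ∈ Finset.univ.erase i, x l ^ C
        + x i ^ (A + C) * ∑ j ∈ Finset.univ.erase i, x j ^ (A + C - 1) *
            ∏ l ∈ (Finset.univ.erase i).erase j, x l ^ (A + C - B))) ∧
    (∑ j, thetaMat d A B C x i j * ((A + C) / x j)
      = ∑ j, fderiv ℝ (fun y => thetaMat d A B C y i j) x (Pi.single j 1)) ∧
    (∀ k : Fin d, fderiv ℝ (fun y => (A + C) * ∑ l, Real.log (y l)) x (Pi.single k 1)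
      = (A + C) / x k) :=
  thetaMat_divergence_gradient_general d A B C x hx i
end

section
/- Bound for (div θ)ᵀ θ⁻¹ (div θ) (Lemma B.1(5)): let d ≥ 2 and A, B, C ∈ ℝ with C ≥ 0, B ≤ A < 2B and A + C ≥ 2, and let θ be as defined below. Then for every x ∈ (0,∞)^d with x_l ≤ 1 for all l: Σ_{i,j=1}^d θ_{ij}(x) · ((A+C)/x_i) · ((A+C)/x_j) ≤ d² (A+C)². -/
/-- Bound for `(div θ)ᵀ θ⁻¹ (div θ)` (Lemma B.1(5)):
`Σ_{i,j} θ_{ij}(x) ((A+C)/x_i)((A+C)/x_j) ≤ d²(A+C)²` on `(0,1]^d`. -/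
theorem thetaMat_div_quadratic_bound (d : ℕ) (hd : 2 ≤ d) (A B C : ℝ)
    (hC : 0 ≤ C) (hBA : B ≤ A) (hA2B : A < 2 * B) (hAC : 2 ≤ A + C)
    (x : Fin d → ℝ) (hx : ∀ l, 0 < x l) (hx1 : ∀ l, x l ≤ 1) :
    ∑ i, ∑ j, thetaMat d A B C x i j * ((A + C) / x i) * ((A + C) / x j)
      ≤ (d : ℝ)^2 * (A + C)^2 := by
  have hACB : 0 ≤ A + C - B := by linarith
  have hAC1 : (1:ℝ) ≤ A + C := by linarith
  have hkey : ∀ i j, thetaMat d A B C x i j ≤ x i * x j := by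
    intro i j
    unfold thetaMat
    by_cases h : i = j
    · subst h
      simp only [if_pos rfl]
      have h1 : (∏ l, x l ^ C) = x i ^ C * ∏ l ∈ Finset.univ.erase i, x l ^ C :=
        (Finset.mul_prod_erase Finset.univ _ (Finset.mem_univ i)).symm
      rw [h1, ← mul_assoc, ← Real.rpow_add (hx i)]
      have hP : (∏ l ∈ Finset.univ.erase i, x l ^ C) ≤ 1 :=
        Finset.prod_le_one (fun l _ => Real.rpow_nonneg (hx l).le C)
          (fun l _ => Real.rpow_le_one (hx l).le (hx1 l) hC)
      calc x i ^ (A + C) * ∏ l ∈ Finset.univ.erase i, x l ^ C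
          ≤ x i ^ (A + C) * 1 :=
            mul_le_mul_of_nonneg_left hP (Real.rpow_nonneg (hx i).le _)
        _ = x i ^ (A + C) := mul_one _
        _ ≤ x i ^ (2:ℝ) := Real.rpow_le_rpow_of_exponent_ge (hx i) (hx1 i) hAC
        _ = x i * x i := by
            rw [show (2:ℝ) = ((2:ℕ):ℝ) by norm_num, Real.rpow_natCast]; ring
    · simp only [if_neg h]
      have hj : j ∈ Finset.univ.erase i := Finset.mem_erase.2 ⟨Ne.symm h, Finset.mem_univ j⟩
      have h1 : (∏ l, x l ^ (A + C - B))
          = x i ^ (A + C - B) * (x j ^ (A + C - B) *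
              ∏ l ∈ (Finset.univ.erase i).erase j, x l ^ (A + C - B)) := by
        rw [← Finset.mul_prod_erase _ _ (Finset.mem_univ i), ← Finset.mul_prod_erase _ _ hj]
      rw [h1]
      have hQ : (∏ l ∈ (Finset.univ.erase i).erase j, x l ^ (A + C - B)) ≤ 1 :=
        Finset.prod_le_one (fun l _ => Real.rpow_nonneg (hx l).le _)
          (fun l _ => Real.rpow_le_one (hx l).le (hx1 l) hACB)
      have hQ0 : (0:ℝ) ≤ ∏ l ∈ (Finset.univ.erase i).erase j, x l ^ (A + C - B) :=
        Finset.prod_nonneg (fun l _ => Real.rpow_nonneg (hx l).le _)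
      have hE : x i ^ B * x j ^ B * (x i ^ (A + C - B) * (x j ^ (A + C - B) *
              ∏ l ∈ (Finset.univ.erase i).erase j, x l ^ (A + C - B)))
          = (x i ^ (A + C)) * (x j ^ (A + C)) *
              ∏ l ∈ (Finset.univ.erase i).erase j, x l ^ (A + C - B) := by
        rw [show A + C = B + (A + C - B) by ring, Real.rpow_add (hx i),
          Real.rpow_add (hx j)]
        ring
      rw [hE]
      have hxi : x i ^ (A + C) ≤ x i := by
        calc x i ^ (A + C) ≤ x i ^ (1:ℝ) :=
              Real.rpow_le_rpow_of_exponent_ge (hx i) (hx1 i) hAC1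
          _ = x i := Real.rpow_one _
      have hxj : x j ^ (A + C) ≤ x j := by
        calc x j ^ (A + C) ≤ x j ^ (1:ℝ) :=
              Real.rpow_le_rpow_of_exponent_ge (hx j) (hx1 j) hAC1
          _ = x j := Real.rpow_one _
      calc (x i ^ (A + C)) * (x j ^ (A + C)) *
              ∏ l ∈ (Finset.univ.erase i).erase j, x l ^ (A + C - B)
          ≤ (x i ^ (A + C)) * (x j ^ (A + C)) * 1 :=
            mul_le_mul_of_nonneg_left hQ
              (mul_nonneg (Real.rpow_nonneg (hx i).le _) (Real.rpow_nonneg (hx j).le _))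
        _ = (x i ^ (A + C)) * (x j ^ (A + C)) := mul_one _
        _ ≤ x i * x j :=
            mul_le_mul hxi hxj (Real.rpow_nonneg (hx j).le _) (hx i).le
  have hterm : ∀ i j, thetaMat d A B C x i j * ((A + C) / x i) * ((A + C) / x j)
      ≤ (A + C)^2 := by
    intro i j
    have hc : (0:ℝ) ≤ (A + C)^2 / (x i * x j) :=
      div_nonneg (sq_nonneg _) (mul_nonneg (hx i).le (hx j).le)
    have h1 : thetaMat d A B C x i j * ((A + C) / x i) * ((A + C) / x j)
        = thetaMat d A B C x i j * ((A + C)^2 / (x i * x j)) := by ring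
    rw [h1]
    calc thetaMat d A B C x i j * ((A + C)^2 / (x i * x j))
        ≤ (x i * x j) * ((A + C)^2 / (x i * x j)) :=
          mul_le_mul_of_nonneg_right (hkey i j) hc
      _ = (A + C)^2 := by
          rw [mul_comm]
          exact div_mul_cancel₀ _ (mul_pos (hx i) (hx j)).ne'
  calc ∑ i, ∑ j, thetaMat d A B C x i j * ((A + C) / x i) * ((A + C) / x j)
      ≤ ∑ _i : Fin d, ∑ _j : Fin d, (A + C)^2 :=
        Finset.sum_le_sum fun i _ => Finset.sum_le_sum fun j _ => hterm i j
    _ = (d : ℝ)^2 * (A + C)^2 := by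
        simp [Finset.sum_const, Finset.card_univ]
        ring
end

section
/- Bound on the double divergence of θ (Lemma B.1(4)): let d ≥ 2 and A, B, C ∈ ℝ with C ≥ 0, B ≤ A < 2B and A + C ≥ 2, and let θ be as defined below. Then for every x ∈ (0,∞)^d with x_l ≤ 1 for all l: 0 ≤ Σ_{i,j=1}^d ∂_i ∂_j θ_{ij}(x) ≤ d (A+C)(A+C−1) + d(d−1)(A+C)². -/
/-!
On the open orthant each entry `θ_ij` is a monomial `x^e = ∏ x_l ^ e_l` with real exponents, and
`∂_i∂_j x^e = e_j (e_i - δ_ij) x^(e - 1_i - 1_j)`. For `θ_ij` both `e_i` and `e_j` equal `A + C`, so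
the coefficient is `(A + C)(A + C - 1)` on the diagonal and `(A + C)²` off it; the hypotheses make
the lowered exponents `e - 1_i - 1_j` nonnegative, so on `(0, 1]^d` the monomial lies in `[0, 1]`.
-/

open Real Finset

section RpowMonomial

variable {ι : Type*} [Fintype ι]

noncomputable def rpowMonomial (e z : ι → ℝ) : ℝ := ∏ l, z l ^ e l

theorem eventually_forall_pos_nhds {y : ι → ℝ} (hy : ∀ l, 0 < y l) :
    ∀ᶠ z in nhds y, ∀ l, 0 < z l :=
  Filter.eventually_all.2 fun l => (continuous_apply l).continuousAt (Ioi_mem_nhds (hy l))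

theorem rpowMonomial_nonneg (e : ι → ℝ) {z : ι → ℝ} (hz : ∀ l, 0 ≤ z l) :
    0 ≤ rpowMonomial e z :=
  prod_nonneg fun l _ => rpow_nonneg (hz l) _

theorem rpowMonomial_le_one {e z : ι → ℝ} (he : 0 ≤ e) (hz0 : ∀ l, 0 ≤ z l)
    (hz1 : ∀ l, z l ≤ 1) : rpowMonomial e z ≤ 1 :=
  prod_le_one (fun l _ => rpow_nonneg (hz0 l) _) fun l _ => rpow_le_one (hz0 l) (hz1 l) (he l)

variable [DecidableEq ι]

theorem rpowMonomial_add_single (e : ι → ℝ) (i : ι) (a : ℝ) {z : ι → ℝ} (hz : ∀ l, 0 < z l) :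
    rpowMonomial (e + Pi.single i a) z = z i ^ a * rpowMonomial e z := by
  have hsingle : ∏ l, z l ^ Pi.single (M := fun _ => ℝ) i a l = z i ^ a :=
    (prod_eq_single i (fun l _ hl => by rw [Pi.single_eq_of_ne hl, rpow_zero])
      (by simp)).trans (by rw [Pi.single_eq_same])
  simp only [rpowMonomial, Pi.add_apply, rpow_add (hz _), prod_mul_distrib, hsingle, mul_comm]

theorem hasFDerivAt_rpowMonomial (e : ι → ℝ) {y : ι → ℝ} (hy : ∀ l, 0 < y l) :
    HasFDerivAt (rpowMonomial e)
      (∑ l, (∏ m ∈ univ.erase l, y m ^ e m) •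
        (e l * y l ^ (e l - 1)) • ContinuousLinearMap.proj (R := ℝ) (φ := fun _ : ι => ℝ) l) y :=
  HasFDerivAt.finsetProd fun l _ => (hasFDerivAt_apply l y).rpow_const (Or.inl (hy l).ne')

theorem fderiv_rpowMonomial_single (e : ι → ℝ) {y : ι → ℝ} (hy : ∀ l, 0 < y l) (j : ι) :
    fderiv ℝ (rpowMonomial e) y (Pi.single j 1) = e j * rpowMonomial (e - Pi.single j 1) y := by
  rw [(hasFDerivAt_rpowMonomial e hy).fderiv, rpowMonomial, ← mul_prod_erase _ _ (mem_univ j),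
    prod_congr rfl fun m hm => by
      rw [Pi.sub_apply, Pi.single_eq_of_ne (ne_of_mem_erase hm), sub_zero]]
  simp only [_root_.sum_apply, smul_apply, ContinuousLinearMap.proj_apply, Pi.single_apply,
    smul_eq_mul, mul_ite, mul_one, mul_zero, sum_ite_eq', mem_univ, ↓reduceIte, Pi.sub_apply]
  ring

theorem fderiv_fderiv_rpowMonomial_single (e : ι → ℝ) {x : ι → ℝ} (hx : ∀ l, 0 < x l)
    (i j : ι) :
    fderiv ℝ (fun y => fderiv ℝ (rpowMonomial e) y (Pi.single j 1)) x (Pi.single i 1)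
      = e j * (e i - (Pi.single j 1 : ι → ℝ) i) *
          rpowMonomial (e - Pi.single j 1 - Pi.single i 1) x := by
  have hfirst : (fun y => fderiv ℝ (rpowMonomial e) y (Pi.single j 1))
      =ᶠ[nhds x] fun y => e j * rpowMonomial (e - Pi.single j 1) y := by
    filter_upwards [eventually_forall_pos_nhds hx] with y hy
    exact fderiv_rpowMonomial_single e hy j
  rw [hfirst.fderiv_eq, fderiv_const_mul (hasFDerivAt_rpowMonomial _ hx).differentiableAt,
    smul_apply, smul_eq_mul, fderiv_rpowMonomial_single _ hx, Pi.sub_apply, mul_assoc]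

end RpowMonomial

section Theta

variable {d : ℕ}

noncomputable def thetaExponent (A B C : ℝ) (i j : Fin d) : Fin d → ℝ :=
  if i = j then Function.const _ C + Pi.single i A
  else Function.const _ (A + C - B) + Pi.single i B + Pi.single j B

theorem thetaMat_apply_eq_rpowMonomial (A B C : ℝ) {z : Fin d → ℝ} (hz : ∀ l, 0 < z l)
    (i j : Fin d) : thetaMat d A B C z i j = rpowMonomial (thetaExponent A B C i j) z := by
  by_cases h : i = j
  · simp only [thetaMat, thetaExponent, if_pos h, rpowMonomial_add_single _ _ _ hz]
    rfl
  · simp only [thetaMat, thetaExponent, if_neg h, rpowMonomial_add_single _ _ _ hz]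
    rw [← mul_assoc, mul_comm (z j ^ B)]
    rfl

theorem thetaExponent_apply_left (A B C : ℝ) (i j : Fin d) :
    thetaExponent A B C i j i = A + C := by
  by_cases h : i = j
  · simp [thetaExponent, h, add_comm]
  · simp [thetaExponent, h]

theorem thetaExponent_apply_right (A B C : ℝ) (i j : Fin d) :
    thetaExponent A B C i j j = A + C := by
  by_cases h : i = j
  · simp [thetaExponent, h, add_comm]
  · simp [thetaExponent, h, Ne.symm h]

theorem thetaExponent_sub_single_sub_single_nonneg {A B C : ℝ} (hC : 0 ≤ C) (hBA : B ≤ A)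
    (hAC : 2 ≤ A + C) (i j : Fin d) :
    0 ≤ thetaExponent A B C i j - Pi.single j 1 - Pi.single i 1 := by
  intro l
  rcases eq_or_ne i j with rfl | hij
  · simp only [thetaExponent, ↓reduceIte, Pi.zero_apply, Pi.sub_apply, Pi.add_apply,
      Function.const_apply, Pi.single_apply]
    split_ifs <;> linarith
  · simp only [thetaExponent, if_neg hij, Pi.zero_apply, Pi.sub_apply, Pi.add_apply,
      Function.const_apply, Pi.single_apply]
    split_ifs <;> simp_all <;> linarith

theorem fderiv_fderiv_thetaMat_single {A B C : ℝ} {x : Fin d → ℝ} (hx : ∀ l, 0 < x l)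
    (i j : Fin d) :
    fderiv ℝ (fun y => fderiv ℝ (fun z => thetaMat d A B C z i j) y (Pi.single j 1)) x
        (Pi.single i 1)
      = (if i = j then (A + C) * (A + C - 1) else (A + C) ^ 2) *
          rpowMonomial (thetaExponent A B C i j - Pi.single j 1 - Pi.single i 1) x := by
  have hsecond : (fun y => fderiv ℝ (fun z => thetaMat d A B C z i j) y (Pi.single j 1))
      =ᶠ[nhds x] fun y => fderiv ℝ (rpowMonomial (thetaExponent A B C i j)) y (Pi.single j 1) := by
    filter_upwards [eventually_forall_pos_nhds hx] with y hy
    rw [Filter.EventuallyEq.fderiv_eq]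
    filter_upwards [eventually_forall_pos_nhds hy] with z hz
    exact thetaMat_apply_eq_rpowMonomial A B C hz i j
  rw [hsecond.fderiv_eq, fderiv_fderiv_rpowMonomial_single _ hx, thetaExponent_apply_left,
    thetaExponent_apply_right, Pi.single_apply]
  split_ifs <;> ring

theorem fderiv_fderiv_thetaMat_single_mem_Icc {A B C : ℝ} (hC : 0 ≤ C) (hBA : B ≤ A)
    (hAC : 2 ≤ A + C) {x : Fin d → ℝ} (hx : ∀ l, 0 < x l) (hx1 : ∀ l, x l ≤ 1) (i j : Fin d) :
    fderiv ℝ (fun y => fderiv ℝ (fun z => thetaMat d A B C z i j) y (Pi.single j 1)) x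
        (Pi.single i 1) ∈ Set.Icc 0 (if i = j then (A + C) * (A + C - 1) else (A + C) ^ 2) := by
  have hcoeff : 0 ≤ if i = j then (A + C) * (A + C - 1) else (A + C) ^ 2 := by
    split_ifs
    · nlinarith
    · positivity
  have hx0 : ∀ l, 0 ≤ x l := fun l => (hx l).le
  rw [fderiv_fderiv_thetaMat_single hx]
  exact ⟨mul_nonneg hcoeff (rpowMonomial_nonneg _ hx0), mul_le_of_le_one_right hcoeff
    (rpowMonomial_le_one (thetaExponent_sub_single_sub_single_nonneg hC hBA hAC i j) hx0 hx1)⟩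

end Theta

theorem Fintype.sum_sum_ite_eq {ι R : Type*} [Fintype ι] [DecidableEq ι] [CommRing R] (a b : R) :
    ∑ i : ι, ∑ j : ι, (if i = j then a else b)
      = Fintype.card ι * a + Fintype.card ι * (Fintype.card ι - 1) * b := by
  have hrow : ∀ i : ι, ∑ j, (if i = j then a else b) = a + (Fintype.card ι - 1) * b := by
    intro i
    have hsplit : ∀ j, (if i = j then a else b) = (if i = j then a - b else 0) + b := by
      intro j
      split_ifs <;> ring
    simp only [hsplit, sum_add_distrib, sum_ite_eq, sum_const, card_univ, nsmul_eq_mul]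
    ring
  simp only [hrow, sum_const, card_univ, nsmul_eq_mul]
  ring

theorem thetaMat_double_divergence_bound_general (d : ℕ) (A B C : ℝ)
    (hC : 0 ≤ C) (hBA : B ≤ A) (hAC : 2 ≤ A + C)
    (x : Fin d → ℝ) (hx : ∀ l, 0 < x l) (hx1 : ∀ l, x l ≤ 1) :
    0 ≤ ∑ i, ∑ j, fderiv ℝ (fun y =>
          fderiv ℝ (fun z => thetaMat d A B C z i j) y (Pi.single j 1)) x
          (Pi.single i 1) ∧
    ∑ i, ∑ j, fderiv ℝ (fun y =>
          fderiv ℝ (fun z => thetaMat d A B C z i j) y (Pi.single j 1)) x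
          (Pi.single i 1)
      ≤ (d : ℝ) * (A + C) * (A + C - 1) + (d : ℝ) * ((d : ℝ) - 1) * (A + C)^2 := by
  have hentry := fderiv_fderiv_thetaMat_single_mem_Icc hC hBA hAC hx hx1
  refine ⟨sum_nonneg fun i _ => sum_nonneg fun j _ => (hentry i j).1, ?_⟩
  calc _ ≤ ∑ i : Fin d, ∑ j : Fin d, if i = j then (A + C) * (A + C - 1) else (A + C) ^ 2 :=
        sum_le_sum fun i _ => sum_le_sum fun j _ => (hentry i j).2
    _ = _ := by
      rw [Fintype.sum_sum_ite_eq, Fintype.card_fin]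
      ring

/-- Bound on the double divergence of `θ` (Lemma B.1(4)):
`0 ≤ Σ_{i,j} ∂_i∂_j θ_{ij}(x) ≤ d(A+C)(A+C−1) + d(d−1)(A+C)²` on `(0,1]^d`. -/
theorem thetaMat_double_divergence_bound (d : ℕ) (hd : 2 ≤ d) (A B C : ℝ)
    (hC : 0 ≤ C) (hBA : B ≤ A) (hA2B : A < 2 * B) (hAC : 2 ≤ A + C)
    (x : Fin d → ℝ) (hx : ∀ l, 0 < x l) (hx1 : ∀ l, x l ≤ 1) :
    0 ≤ ∑ i, ∑ j, fderiv ℝ (fun y =>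
          fderiv ℝ (fun z => thetaMat d A B C z i j) y (Pi.single j 1)) x
          (Pi.single i 1) ∧
    ∑ i, ∑ j, fderiv ℝ (fun y =>
          fderiv ℝ (fun z => thetaMat d A B C z i j) y (Pi.single j 1)) x
          (Pi.single i 1)
      ≤ (d : ℝ) * (A + C) * (A + C - 1) + (d : ℝ) * ((d : ℝ) - 1) * (A + C)^2 :=
  thetaMat_double_divergence_bound_general d A B C hC hBA hAC x hx hx1
end
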